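/- arXiv:2503.12744 — 6 statements merged into one kernel-verified Lean document; each statement's English description precedes it below -/
import Mathlib

section
/- Let σ be the ReLU activation and let f(x) = Σ_{k=1}^m s_k·σ(⟨a_k,x⟩+b_k) + c be a shallow ReLU network with s_k ≠ 0 and a_k ≠ 0 for all k, such that the hyperplanes H(a_k,b_k), k = 1,…,m, are mutually distinct. If g(x) = Σ_{k=1}^{m'} s'_k·σ(⟨a'_k,x⟩+b'_k) + c' is any shallow ReLU network with g(x) = f(x) for all x ∈ ℝ^d, then m' ≥ m. In particular, f is irreducible. -/
open Finset

/-- The ReLU activation function. -/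
noncomputable def relu (x : ℝ) : ℝ := max x 0

/-- Dot product on `ℝ^d`. -/
noncomputable def dotp {d : ℕ} (a x : Fin d → ℝ) : ℝ := ∑ i, a i * x i

/-- A shallow ReLU network with `m` neurons. -/
noncomputable def reluNet {d m : ℕ} (a : Fin m → Fin d → ℝ) (b s : Fin m → ℝ) (c : ℝ)
    (x : Fin d → ℝ) : ℝ :=
  (∑ k, s k * relu (dotp (a k) x + b k)) + c

/-- The hyperplane `H(a,b) = {x : ⟨a,x⟩ + b = 0}`. -/
def hyperplane {d : ℕ} (a : Fin d → ℝ) (b : ℝ) : Set (Fin d → ℝ) :=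
  {x | dotp a x + b = 0}

/-- `f`, viewed as a network with `m` neurons, is irreducible: no shallow ReLU network with
fewer than `m` neurons agrees with `f` everywhere. -/
def IrreducibleNet {d : ℕ} (m : ℕ) (f : (Fin d → ℝ) → ℝ) : Prop :=
  ¬ ∃ m' < m, ∃ (a : Fin m' → Fin d → ℝ) (b s : Fin m' → ℝ) (c : ℝ),
    ∀ x, reluNet a b s c x = f x


lemma dotp_add_right {d : ℕ} (a x y : Fin d → ℝ) : dotp a (x + y) = dotp a x + dotp a y := by
  simp [dotp, mul_add, Finset.sum_add_distrib]


lemma dotp_smul_right {d : ℕ} (a : Fin d → ℝ) (t : ℝ) (x : Fin d → ℝ) :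
    dotp a (t • x) = t * dotp a x := by
  simp [dotp, Finset.mul_sum, mul_left_comm]


lemma dotp_sub_right {d : ℕ} (a x y : Fin d → ℝ) : dotp a (x - y) = dotp a x - dotp a y := by
  simp [dotp, mul_sub, Finset.sum_sub_distrib]


lemma dotp_comm {d : ℕ} (a x : Fin d → ℝ) : dotp a x = dotp x a := by
  simp [dotp, mul_comm]


lemma dotp_self_pos {d : ℕ} {a : Fin d → ℝ} (ha : a ≠ 0) : 0 < dotp a a := by
  obtain ⟨i, hi⟩ := Function.ne_iff.1 ha
  exact Finset.sum_pos' (fun j _ => mul_self_nonneg _) ⟨i, Finset.mem_univ i, mul_self_pos.2 hi⟩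

lemma relu_of_nonneg {x : ℝ} (h : 0 ≤ x) : relu x = x := max_eq_left h
lemma relu_of_nonpos {x : ℝ} (h : x ≤ 0) : relu x = 0 := max_eq_right h

lemma relu_triple {C t : ℝ} (h : |t| < |C|) :
    relu (C + t) + relu (C - t) - 2 * relu C = 0 := by
  rcases lt_or_ge C 0 with hC | hC
  · rw [abs_of_neg hC] at h
    rw [relu_of_nonpos (by cases abs_lt.1 h; linarith),
      relu_of_nonpos (by cases abs_lt.1 h; linarith), relu_of_nonpos hC.le]; ring
  · rw [abs_of_nonneg hC] at h
    rw [relu_of_nonneg (by cases abs_lt.1 h; linarith),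
      relu_of_nonneg (by cases abs_lt.1 h; linarith), relu_of_nonneg hC]; ring

lemma net_eval {d n : ℕ} (A : Fin n → Fin d → ℝ) (B S : Fin n → ℝ) (C : ℝ)
    (x0 v : Fin d → ℝ) (t : ℝ) :
    reluNet A B S C (x0 + t • v)
      = (∑ i, S i * relu ((dotp (A i) x0 + B i) + t * dotp (A i) v)) + C := by
  simp only [reluNet]
  congr 1
  refine Finset.sum_congr rfl fun i _ => ?_
  congr 2
  rw [dotp_add_right, dotp_smul_right]; ring

lemma net_triple {d n : ℕ} (A : Fin n → Fin d → ℝ) (B S : Fin n → ℝ) (C : ℝ)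
    (x0 v : Fin d → ℝ) (t : ℝ) :
    reluNet A B S C (x0 + t • v) + reluNet A B S C (x0 + (-t) • v)
        - 2 * reluNet A B S C x0
      = ∑ i, S i * (relu ((dotp (A i) x0 + B i) + t * dotp (A i) v)
          + relu ((dotp (A i) x0 + B i) - t * dotp (A i) v)
          - 2 * relu (dotp (A i) x0 + B i)) := by
  rw [net_eval, net_eval]
  have h2 : (∑ i, S i * relu ((dotp (A i) x0 + B i) + (-t) * dotp (A i) v))
      = ∑ i, S i * relu ((dotp (A i) x0 + B i) - t * dotp (A i) v) :=
    Finset.sum_congr rfl fun i _ => by rw [neg_mul, ← sub_eq_add_neg]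
  rw [h2]
  simp only [reluNet, mul_add, mul_sub, Finset.sum_add_distrib, Finset.sum_sub_distrib]
  have h3 : (∑ i, S i * (2 * relu (dotp (A i) x0 + B i)))
      = 2 * ∑ i, S i * relu (dotp (A i) x0 + B i) := by
    rw [Finset.mul_sum]; exact Finset.sum_congr rfl fun i _ => by ring
  rw [h3]; ring

lemma hyperplane_nonempty {d : ℕ} {a : Fin d → ℝ} (ha : a ≠ 0) (b : ℝ) :
    (hyperplane a b).Nonempty := by
  refine ⟨(-b / dotp a a) • a, ?_⟩
  have h := dotp_self_pos ha
  simp only [hyperplane, Set.mem_setOf_eq, dotp_smul_right]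
  field_simp
  ring

lemma hyperplane_affine {d : ℕ} {a : Fin d → ℝ} {b : ℝ} :
    ∀ x ∈ hyperplane a b, ∀ y ∈ hyperplane a b, ∀ t : ℝ, x + t • (y - x) ∈ hyperplane a b := by
  intro x hx y hy t
  simp only [hyperplane, Set.mem_setOf_eq] at *
  rw [dotp_add_right, dotp_smul_right, dotp_sub_right]
  have hd : dotp a y - dotp a x = 0 := by linarith
  rw [hd, mul_zero]; linarith

lemma hyperplane_subset_eq {d : ℕ} {a a' : Fin d → ℝ} {b b' : ℝ} (ha : a ≠ 0) (ha' : a' ≠ 0)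
    (h : hyperplane a b ⊆ hyperplane a' b') : hyperplane a b = hyperplane a' b' := by
  have hq := dotp_self_pos ha
  set q := dotp a a with hqdef
  set p : Fin d → ℝ := (-b / q) • a with hp
  have hpH : p ∈ hyperplane a b := by
    simp only [hyperplane, Set.mem_setOf_eq, hp, dotp_smul_right]; field_simp; rw [hqdef]; ring
  have hp' : dotp a' p + b' = 0 := h hpH
  have hw : ∀ w : Fin d → ℝ, dotp a w = 0 → dotp a' w = 0 := by
    intro w hwa
    have hmem : p + w ∈ hyperplane a b := by
      simp only [hyperplane, Set.mem_setOf_eq, dotp_add_right, hwa]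
      simpa [hyperplane, Set.mem_setOf_eq] using hpH
    have h2 := h hmem
    simp only [hyperplane, Set.mem_setOf_eq, dotp_add_right] at h2
    linarith
  set lam : ℝ := dotp a a' / q with hlam
  have key : a' = lam • a := by
    set w : Fin d → ℝ := a' - lam • a with hwdef
    have hAw : dotp a w = 0 := by
      rw [hwdef, dotp_sub_right, dotp_smul_right, hlam]; field_simp; rw [hqdef]; ring
    have h1 : dotp a' w = 0 := hw w hAw
    have h2 : dotp w w = 0 := by
      have : dotp w a' - lam * dotp w a = 0 := by
        rw [dotp_comm w a', dotp_comm w a, h1, hAw]; ring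
      calc dotp w w = dotp w a' - lam * dotp w a := by
            rw [hwdef, dotp_sub_right, dotp_smul_right]
        _ = 0 := this
    have : w = 0 := by
      by_contra hne
      exact absurd h2 (ne_of_gt (dotp_self_pos hne))
    rw [hwdef, sub_eq_zero] at this
    exact this
  have hlam0 : lam ≠ 0 := by
    intro h0
    rw [h0, zero_smul] at key
    exact ha' key
  have hap : dotp a p = -b := by
    rw [hp, dotp_smul_right]; field_simp; rw [hqdef]
  have hb' : b' = lam * b := by
    have : dotp a' p = lam * dotp a p := by rw [key, dotp_comm, dotp_smul_right, dotp_comm a p]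
    rw [hap] at this
    linarith [hp', this]
  ext x
  simp only [hyperplane, Set.mem_setOf_eq, key, hb', dotp_comm (lam • a) x,
    dotp_smul_right, dotp_comm x a]
  constructor
  · intro hx
    have h0 : lam * (dotp a x + b) = 0 := by rw [hx, mul_zero]
    linear_combination h0
  · intro hx
    have : lam * (dotp a x + b) = 0 := by linarith
    rcases mul_eq_zero.1 this with h0 | h0
    · exact absurd h0 hlam0
    · exact h0

lemma exists_good {d n : ℕ} (A : Fin n → Fin d → ℝ) (B : Fin n → ℝ)
    (P : Set (Fin d → ℝ))
    (hP : ∀ x ∈ P, ∀ y ∈ P, ∀ t : ℝ, x + t • (y - x) ∈ P)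
    (hne : P.Nonempty) (h : ∀ i, ∃ x ∈ P, dotp (A i) x + B i ≠ 0) :
    ∃ x ∈ P, ∀ i, dotp (A i) x + B i ≠ 0 := by
  classical
  suffices H : ∀ s : Finset (Fin n), ∃ x ∈ P, ∀ i ∈ s, dotp (A i) x + B i ≠ 0 by
    obtain ⟨x, hx, hall⟩ := H Finset.univ
    exact ⟨x, hx, fun i => hall i (mem_univ i)⟩
  intro s
  induction s using Finset.induction_on with
  | empty => obtain ⟨x, hx⟩ := hne; exact ⟨x, hx, by simp⟩
  | @insert i s his ih =>
    obtain ⟨x, hxP, hx⟩ := ih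
    obtain ⟨y, hyP, hy⟩ := h i
    set F : Fin n → ℝ := fun j => dotp (A j) x + B j with hF
    set G : Fin n → ℝ := fun j => (dotp (A j) y + B j) - (dotp (A j) x + B j) with hG
    have heval : ∀ (j : Fin n) (t : ℝ),
        dotp (A j) (x + t • (y - x)) + B j = F j + t * G j := by
      intro j t
      rw [dotp_add_right, dotp_smul_right, dotp_sub_right, hF, hG]; ring
    obtain ⟨t, ht⟩ := Infinite.exists_notMem_finset
      ((insert i s).image (fun j => -(F j) / G j))
    refine ⟨x + t • (y - x), hP x hxP y hyP t, ?_⟩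
    intro j hj
    rw [heval]
    intro h0
    by_cases hGj : G j = 0
    · rw [hGj, mul_zero, add_zero] at h0
      rcases Finset.mem_insert.1 hj with rfl | hjs
      · rw [hF] at h0
        apply hy
        have : G j = dotp (A j) y + B j := by rw [hG]; simp [h0]
        rw [← this, hGj]
      · exact hx j hjs h0
    · apply ht
      refine Finset.mem_image.2 ⟨j, hj, ?_⟩
      field_simp
      linarith

open Filter Topology

lemma key {d m m' : ℕ} (a : Fin m → Fin d → ℝ) (b s : Fin m → ℝ) (c : ℝ)
    (a' : Fin m' → Fin d → ℝ) (b' s' : Fin m' → ℝ) (c' : ℝ)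
    (hs : ∀ k, s k ≠ 0) (ha : ∀ k, a k ≠ 0)
    (hH : ∀ k1 k2 : Fin m, k1 ≠ k2 →
      hyperplane (a k1) (b k1) ≠ hyperplane (a k2) (b k2))
    (heq : ∀ x, reluNet a' b' s' c' x = reluNet a b s c x) (k : Fin m) :
    ∃ j : Fin m', hyperplane (a' j) (b' j) = hyperplane (a k) (b k) := by
  classical
  by_contra hcon
  push_neg at hcon
  -- the hyperplane H(a k, b k)
  set P : Set (Fin d → ℝ) := hyperplane (a k) (b k) with hPdef
  -- combined family of constraints, indexed by Fin m ⊕ Fin m'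
  set A : Fin m ⊕ Fin m' → (Fin d → ℝ) × ℝ := fun u =>
    match u with
    | .inl i => if i = k then ((0 : Fin d → ℝ), (1 : ℝ)) else (a i, b i)
    | .inr j => if a' j = 0 then ((0 : Fin d → ℝ), (1 : ℝ)) else (a' j, b' j)
    with hAdef
  have hPne : P.Nonempty := hyperplane_nonempty (ha k) (b k)
  have hdot0 : ∀ x : Fin d → ℝ, dotp (0 : Fin d → ℝ) x = 0 := by
    intro x; simp [dotp]
  have hnotsub : ∀ u, ∃ x ∈ P, dotp (A u).1 x + (A u).2 ≠ 0 := by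
    intro u
    match u with
    | .inl i =>
      by_cases hik : i = k
      · obtain ⟨x, hx⟩ := hPne
        exact ⟨x, hx, by simp [hAdef, hik, hdot0]⟩
      · simp only [hAdef, hik, if_false]
        by_contra hc
        push_neg at hc
        have hsub : P ⊆ hyperplane (a i) (b i) := by
          intro x hx
          have := hc x hx
          simpa [hyperplane] using this
        exact hH k i (fun hki => hik hki.symm) (hyperplane_subset_eq (ha k) (ha i) hsub)
    | .inr j =>
      by_cases hj0 : a' j = 0
      · obtain ⟨x, hx⟩ := hPne
        exact ⟨x, hx, by simp [hAdef, hj0, hdot0]⟩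
      · simp only [hAdef, hj0, if_false]
        by_contra hc
        push_neg at hc
        have hsub : P ⊆ hyperplane (a' j) (b' j) := by
          intro x hx
          have := hc x hx
          simpa [hyperplane] using this
        exact hcon j (hyperplane_subset_eq (ha k) hj0 hsub).symm
  -- reindex through an equivalence to Fin (m + m') to apply exists_good
  obtain ⟨x0, hx0P, hx0⟩ := exists_good
    (fun u : Fin (m + m') => (A ((finSumFinEquiv.symm) u)).1)
    (fun u : Fin (m + m') => (A ((finSumFinEquiv.symm) u)).2)
    P (fun x hx y hy t => hyperplane_affine x hx y hy t) hPne
    (fun u => hnotsub _)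
  have hx0' : ∀ u : Fin m ⊕ Fin m', dotp (A u).1 x0 + (A u).2 ≠ 0 := by
    intro u
    have := hx0 (finSumFinEquiv u)
    simpa using this
  have hx0a : ∀ i : Fin m, i ≠ k → dotp (a i) x0 + b i ≠ 0 := by
    intro i hik
    have := hx0' (.inl i)
    simpa [hAdef, hik] using this
  have hx0a' : ∀ j : Fin m', a' j ≠ 0 → dotp (a' j) x0 + b' j ≠ 0 := by
    intro j hj
    have := hx0' (.inr j)
    simpa [hAdef, hj] using this
  have hx0k : dotp (a k) x0 + b k = 0 := hx0P
  -- the direction v with ⟨a k, v⟩ = 1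
  set v : Fin d → ℝ := (dotp (a k) (a k))⁻¹ • a k with hv
  have hvk : dotp (a k) v = 1 := by
    rw [hv, dotp_smul_right]
    exact inv_mul_cancel₀ (ne_of_gt (dotp_self_pos (ha k)))
  -- choose ε > 0 small
  have hev1 : ∀ i : Fin m, ∀ᶠ t : ℝ in 𝓝[>] 0,
      i ≠ k → |t * dotp (a i) v| < |dotp (a i) x0 + b i| := by
    intro i
    by_cases hik : i = k
    · filter_upwards with t; intro ht; exact absurd hik ht
    · have habs : (0:ℝ) < |dotp (a i) x0 + b i| := abs_pos.2 (hx0a i hik)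
      have htend : Tendsto (fun t : ℝ => |t * dotp (a i) v|) (𝓝[>] 0) (𝓝 0) := by
        have : Tendsto (fun t : ℝ => t * dotp (a i) v) (𝓝 0) (𝓝 (0 * dotp (a i) v)) :=
          (tendsto_id.mul_const _)
        rw [zero_mul] at this
        have := this.abs
        rw [abs_zero] at this
        exact this.mono_left nhdsWithin_le_nhds
      filter_upwards [htend.eventually_lt_const habs] with t ht _
      exact ht
  have hev2 : ∀ j : Fin m', ∀ᶠ t : ℝ in 𝓝[>] 0,
      a' j ≠ 0 → |t * dotp (a' j) v| < |dotp (a' j) x0 + b' j| := by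
    intro j
    by_cases hj : a' j = 0
    · filter_upwards with t; intro ht; exact absurd hj ht
    · have habs : (0:ℝ) < |dotp (a' j) x0 + b' j| := abs_pos.2 (hx0a' j hj)
      have htend : Tendsto (fun t : ℝ => |t * dotp (a' j) v|) (𝓝[>] 0) (𝓝 0) := by
        have : Tendsto (fun t : ℝ => t * dotp (a' j) v) (𝓝 0) (𝓝 (0 * dotp (a' j) v)) :=
          (tendsto_id.mul_const _)
        rw [zero_mul] at this
        have := this.abs
        rw [abs_zero] at this
        exact this.mono_left nhdsWithin_le_nhds
      filter_upwards [htend.eventually_lt_const habs] with t ht _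
      exact ht
  have hall : ∀ᶠ t : ℝ in 𝓝[>] 0,
      (∀ i : Fin m, i ≠ k → |t * dotp (a i) v| < |dotp (a i) x0 + b i|) ∧
      (∀ j : Fin m', a' j ≠ 0 → |t * dotp (a' j) v| < |dotp (a' j) x0 + b' j|) :=
    (eventually_all.2 hev1).and (eventually_all.2 hev2)
  obtain ⟨ε, ⟨hε1, hε2⟩, hεpos⟩ := (hall.and self_mem_nhdsWithin).exists
  -- compute the second difference for the net f
  have hf : reluNet a b s c (x0 + ε • v) + reluNet a b s c (x0 + (-ε) • v)
      - 2 * reluNet a b s c x0 = s k * ε := by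
    rw [net_triple]
    rw [Finset.sum_eq_single k]
    · rw [hx0k, hvk, mul_one, zero_add, zero_sub, relu_of_nonneg hεpos.le,
        relu_of_nonpos (neg_nonpos.2 hεpos.le), relu_of_nonpos le_rfl]
      ring
    · intro i _ hik
      rw [relu_triple (hε1 i hik), mul_zero]
    · intro h; exact absurd (mem_univ k) h
  have hg : reluNet a' b' s' c' (x0 + ε • v) + reluNet a' b' s' c' (x0 + (-ε) • v)
      - 2 * reluNet a' b' s' c' x0 = 0 := by
    rw [net_triple]
    apply Finset.sum_eq_zero
    intro j _
    by_cases hj : a' j = 0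
    · rw [hj, hdot0 v, mul_zero, add_zero, sub_zero]
      ring
    · rw [relu_triple (hε2 j hj), mul_zero]
  rw [heq, heq, heq] at hg
  rw [hg] at hf
  exact (hs k) (by
    rcases mul_eq_zero.1 hf.symm with h0 | h0
    · exact h0
    · exact absurd h0 (ne_of_gt hεpos))

/-- If the coefficients are nonzero and the hyperplanes are mutually distinct, then any
shallow ReLU network agreeing with `f` everywhere has at least `m` neurons; in particular
`f` is irreducible. -/
theorem stmt1 {d m : ℕ} (a : Fin m → Fin d → ℝ) (b s : Fin m → ℝ) (c : ℝ)
    (hs : ∀ k, s k ≠ 0) (ha : ∀ k, a k ≠ 0)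
    (hH : ∀ k1 k2 : Fin m, k1 ≠ k2 →
      hyperplane (a k1) (b k1) ≠ hyperplane (a k2) (b k2)) :
    (∀ (m' : ℕ) (a' : Fin m' → Fin d → ℝ) (b' s' : Fin m' → ℝ) (c' : ℝ),
      (∀ x, reluNet a' b' s' c' x = reluNet a b s c x) → m ≤ m') ∧
    IrreducibleNet m (reluNet a b s c) := by
  have H1 : ∀ (m' : ℕ) (a' : Fin m' → Fin d → ℝ) (b' s' : Fin m' → ℝ) (c' : ℝ),
      (∀ x, reluNet a' b' s' c' x = reluNet a b s c x) → m ≤ m' := by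
    intro m' a' b' s' c' heq
    have hk := fun k => key a b s c a' b' s' c' hs ha hH heq k
    choose φ hφ using hk
    have hinj : Function.Injective φ := by
      intro k1 k2 h12
      by_contra hne
      exact hH k1 k2 hne (by rw [← hφ k1, h12, hφ k2])
    simpa using Fintype.card_le_of_injective φ hinj
  refine ⟨H1, ?_⟩
  rintro ⟨m', hm', a', b', s', c', heq⟩
  exact absurd (H1 m' a' b' s' c' heq) (not_le.2 hm')
end

section
/- Let σ be the ReLU activation and let f(x) = Σ_{k∈K1} ( s_{k,1}·σ(⟨a_k,x⟩+b_k) + s_{k,2}·σ(−⟨a_k,x⟩−b_k) ) + Σ_{k∈K2} s_k·σ(⟨a_k,x⟩+b_k) + c with #K1 ≥ 3. Then for any choice of signs ε_k ∈ {−1,+1}, k ∈ K1, and with i_k := 1 if ε_k = 1 and i_k := 2 if ε_k = −1 and w := Σ_{k∈K1} s_{k,i_k}·ε_k·a_k, one has for all x ∈ ℝ^d: f(x) = Σ_{k∈K1} (s_{k,1}+s_{k,2})·σ(⟨−ε_k·a_k,x⟩−ε_k·b_k) + Σ_{k∈K2} s_k·σ(⟨a_k,x⟩+b_k) + σ(⟨w,x⟩)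 − σ(⟨−w,x⟩) + Σ_{k∈K1} s_{k,i_k}·ε_k·b_k + c. Consequently f agrees everywhere with a shallow ReLU network having at most #K1 + #K2 + 2 ≤ 2·#K1 + #K2 − 1 neurons, so f is reducible. -/
open Finset

lemma relu_sub (t : ℝ) : relu t - relu (-t) = t := by
  unfold relu
  rcases le_total 0 t with h | h
  · rw [max_eq_left h, max_eq_right (neg_nonpos.mpr h)]; ring
  · rw [max_eq_right h, max_eq_left (neg_nonneg.mpr h)]; ring

lemma dotp_smul {d : ℕ} (r : ℝ) (a x : Fin d → ℝ) : dotp (r • a) x = r * dotp a x := by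
  simp [dotp, Finset.mul_sum, mul_assoc]

lemma dotp_neg {d : ℕ} (a x : Fin d → ℝ) : dotp (-a) x = -dotp a x := by
  rw [← neg_one_smul ℝ a, dotp_smul]; ring

lemma dotp_sum {d : ℕ} (K : Finset ℕ) (g : ℕ → Fin d → ℝ) (x : Fin d → ℝ) :
    dotp (∑ k ∈ K, g k) x = ∑ k ∈ K, dotp (g k) x := by
  simp only [dotp, Finset.sum_apply, Finset.sum_mul]
  rw [Finset.sum_comm]

/-- If `#K1 ≥ 3`, the rewriting identity holds for any choice of signs, and `f` agrees
everywhere with a shallow ReLU network with at most `#K1 + #K2 + 2` neurons; hence `f`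
is reducible. -/
theorem stmt2 {d : ℕ} (K1 K2 : Finset ℕ)
    (a : ℕ → Fin d → ℝ) (b : ℕ → ℝ) (s1 s2 s : ℕ → ℝ) (c : ℝ)
    (hK1 : 3 ≤ K1.card)
    (f : (Fin d → ℝ) → ℝ)
    (hf : ∀ x, f x = (∑ k ∈ K1, (s1 k * relu (dotp (a k) x + b k)
        + s2 k * relu (-(dotp (a k) x) - b k)))
        + (∑ k ∈ K2, s k * relu (dotp (a k) x + b k)) + c) :
    (∀ ε : ℕ → ℝ, (∀ k ∈ K1, ε k = 1 ∨ ε k = -1) →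
      ∀ x, f x = (∑ k ∈ K1, (s1 k + s2 k) * relu (dotp ((-(ε k)) • a k) x - ε k * b k))
        + (∑ k ∈ K2, s k * relu (dotp (a k) x + b k))
        + relu (dotp (∑ k ∈ K1, ((if ε k = 1 then s1 k else s2 k) * ε k) • a k) x)
        - relu (dotp (-(∑ k ∈ K1, ((if ε k = 1 then s1 k else s2 k) * ε k) • a k)) x)
        + (∑ k ∈ K1, (if ε k = 1 then s1 k else s2 k) * ε k * b k) + c) ∧
    (∃ m' : ℕ, m' ≤ K1.card + K2.card + 2 ∧
      ∃ (a' : Fin m' → Fin d → ℝ) (b' s' : Fin m' → ℝ) (c' : ℝ),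
        ∀ x, reluNet a' b' s' c' x = f x) ∧
    (K1.card + K2.card + 2 ≤ 2 * K1.card + K2.card - 1) ∧
    (∃ m' < 2 * K1.card + K2.card,
      ∃ (a' : Fin m' → Fin d → ℝ) (b' s' : Fin m' → ℝ) (c' : ℝ),
        ∀ x, reluNet a' b' s' c' x = f x) := by
  classical
  -- Part 1: the rewriting identity
  have hmain : ∀ ε : ℕ → ℝ, (∀ k ∈ K1, ε k = 1 ∨ ε k = -1) →
      ∀ x, f x = (∑ k ∈ K1, (s1 k + s2 k) * relu (dotp ((-(ε k)) • a k) x - ε k * b k))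
        + (∑ k ∈ K2, s k * relu (dotp (a k) x + b k))
        + relu (dotp (∑ k ∈ K1, ((if ε k = 1 then s1 k else s2 k) * ε k) • a k) x)
        - relu (dotp (-(∑ k ∈ K1, ((if ε k = 1 then s1 k else s2 k) * ε k) • a k)) x)
        + (∑ k ∈ K1, (if ε k = 1 then s1 k else s2 k) * ε k * b k) + c := by
    intro ε hε x
    set W : Fin d → ℝ := ∑ k ∈ K1, ((if ε k = 1 then s1 k else s2 k) * ε k) • a k with hW
    have hWx : dotp W x = ∑ k ∈ K1, (if ε k = 1 then s1 k else s2 k) * ε k * dotp (a k) x := by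
      rw [hW, dotp_sum]
      exact Finset.sum_congr rfl fun k _ => dotp_smul _ _ _
    have hterm : ∀ k ∈ K1,
        s1 k * relu (dotp (a k) x + b k) + s2 k * relu (-(dotp (a k) x) - b k)
        = (s1 k + s2 k) * relu (dotp ((-(ε k)) • a k) x - ε k * b k)
          + ((if ε k = 1 then s1 k else s2 k) * ε k) * (dotp (a k) x + b k) := by
      intro k hk
      have hd : dotp ((-(ε k)) • a k) x = -(ε k) * dotp (a k) x := dotp_smul _ _ _
      have h1 : relu (dotp (a k) x + b k)
          = relu (-(dotp (a k) x + b k)) + (dotp (a k) x + b k) := by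
        have := relu_sub (dotp (a k) x + b k); linarith
      rcases hε k hk with h | h <;> rw [hd, h]
      · have harg : -(1:ℝ) * dotp (a k) x - 1 * b k = -(dotp (a k) x + b k) := by ring
        have harg2 : -(dotp (a k) x) - b k = -(dotp (a k) x + b k) := by ring
        rw [harg, harg2, h1]
        simp; ring
      · have harg : -(-1:ℝ) * dotp (a k) x - (-1) * b k = dotp (a k) x + b k := by ring
        have harg2 : -(dotp (a k) x) - b k = -(dotp (a k) x + b k) := by ring
        rw [harg, harg2, h1]
        norm_num; ring
    have hreluW : relu (dotp W x) - relu (dotp (-W) x) = dotp W x := by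
      rw [dotp_neg]; exact relu_sub _
    rw [hf x, Finset.sum_congr rfl hterm, Finset.sum_add_distrib]
    have hsplit : ∑ k ∈ K1, ((if ε k = 1 then s1 k else s2 k) * ε k) * (dotp (a k) x + b k)
        = dotp W x + ∑ k ∈ K1, (if ε k = 1 then s1 k else s2 k) * ε k * b k := by
      rw [hWx, ← Finset.sum_add_distrib]
      exact Finset.sum_congr rfl fun k _ => by ring
    rw [hsplit]
    linarith [hreluW]
  -- the simplified identity with all signs `+1`
  have h1 : ∀ x, f x = (∑ k ∈ K1, (s1 k + s2 k) * relu (dotp ((-(1:ℝ)) • a k) x - b k))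
      + (∑ k ∈ K2, s k * relu (dotp (a k) x + b k))
      + relu (dotp (∑ k ∈ K1, (s1 k) • a k) x)
      - relu (dotp (-(∑ k ∈ K1, (s1 k) • a k)) x)
      + (∑ k ∈ K1, s1 k * b k) + c := by
    intro x
    have h := hmain (fun _ => (1:ℝ)) (fun k _ => Or.inl rfl) x
    simp only [eq_self_iff_true, if_true, mul_one, one_mul] at h
    exact h
  -- the reduced network
  have hnet : ∃ (a' : Fin (K1.card + K2.card + 2) → Fin d → ℝ)
      (b' s' : Fin (K1.card + K2.card + 2) → ℝ) (c' : ℝ),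
      ∀ x, reluNet a' b' s' c' x = f x := by
    set W : Fin d → ℝ := ∑ k ∈ K1, (s1 k) • a k with hWdef
    set e1 := K1.equivFin with he1
    set e2 := K2.equivFin with he2
    refine ⟨Fin.addCases (Fin.addCases (fun i => (-(1:ℝ)) • a (e1.symm i))
        (fun i => a (e2.symm i))) ![W, -W],
      Fin.addCases (Fin.addCases (fun i => -(b (e1.symm i))) (fun i => b (e2.symm i)))
        ![(0:ℝ), 0],
      Fin.addCases (Fin.addCases (fun i => s1 (e1.symm i) + s2 (e1.symm i))
        (fun i => s (e2.symm i))) ![(1:ℝ), -1],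
      (∑ k ∈ K1, s1 k * b k) + c, ?_⟩
    intro x
    rw [reluNet, h1 x]
    rw [Fin.sum_univ_add, Fin.sum_univ_add]
    simp only [Fin.addCases_left, Fin.addCases_right, Fin.sum_univ_two,
      Matrix.cons_val_zero, Matrix.cons_val_one, Matrix.head_cons]
    have hA : ∑ i : Fin K1.card, (s1 (e1.symm i) + s2 (e1.symm i))
          * relu (dotp ((-(1:ℝ)) • a (e1.symm i)) x + -(b (e1.symm i)))
        = ∑ k ∈ K1, (s1 k + s2 k) * relu (dotp ((-(1:ℝ)) • a k) x - b k) := by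
      rw [Equiv.sum_comp e1.symm (fun k : K1 =>
        (s1 k + s2 k) * relu (dotp ((-(1:ℝ)) • a k) x + -(b k)))]
      rw [Finset.sum_coe_sort K1
        (fun k => (s1 k + s2 k) * relu (dotp ((-(1:ℝ)) • a k) x + -(b k)))]
      exact Finset.sum_congr rfl fun k _ => by rw [sub_eq_add_neg]
    have hB : ∑ i : Fin K2.card, s (e2.symm i) * relu (dotp (a (e2.symm i)) x + b (e2.symm i))
        = ∑ k ∈ K2, s k * relu (dotp (a k) x + b k) := by
      rw [Equiv.sum_comp e2.symm (fun k : K2 => s k * relu (dotp (a k) x + b k))]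
      exact Finset.sum_coe_sort K2 (fun k => s k * relu (dotp (a k) x + b k))
    rw [hA, hB]
    simp only [add_zero, one_mul, neg_one_mul]
    linarith
  exact ⟨hmain, ⟨K1.card + K2.card + 2, le_refl _, hnet⟩, by omega,
    ⟨K1.card + K2.card + 2, by omega, hnet⟩⟩
end

section
/- Let σ be the ReLU activation and let f_N(x) = Σ_{k=1}^m s_k·σ(⟨a_k,x⟩+b_k) + c and f_{N'}(x) = Σ_{k=1}^{m'} s'_k·σ(⟨a'_k,x⟩+b'_k) + c' be irreducible shallow ReLU networks such that the hyperplanes H(a_k,b_k), k=1,…,m, are mutually distinct and the hyperplanes H(a'_k,b'_k), k=1,…,m', are mutually distinct. Then f_N(x) = f_{N'}(x) for all x ∈ ℝ^d if and only if the following conditions all hold: (i) m = m'; (ii) there exist a permutation π of {1,…,m} and numbers ε_k ∈ {−1,+1}, λ_k > 0 for k = 1,…,m, such that ε_k·λ_k·(a_k, b_k) = (a'_{π(k)}, b'_{π(k)}) and s_k/λ_k = s'_{π(k)} for all k; (iii) with K := {k : ε_k = −1, 1 ≤ k ≤ m}, one has Σ_{k∈K} s_k·a_k = 0 and c' = c +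 Σ_{k∈K} s_k·b_k (and in particular c = c' when K = ∅). -/
open Finset

lemma dotp_smul_left {d : ℕ} (t : ℝ) (a x : Fin d → ℝ) :
    dotp (t • a) x = t * dotp a x := by
  simp only [dotp, Finset.mul_sum, Pi.smul_apply, smul_eq_mul]
  exact Finset.sum_congr rfl (fun i _ => by ring)

lemma dotp_zero_right {d : ℕ} (a : Fin d → ℝ) : dotp a (0 : Fin d → ℝ) = 0 := by
  simp [dotp]

lemma dotp_sum_left {d : ℕ} {ι : Type*} (u : Finset ι) (f : ι → Fin d → ℝ) (x : Fin d → ℝ) :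
    dotp (∑ k ∈ u, f k) x = ∑ k ∈ u, dotp (f k) x := by
  simp only [dotp, Finset.sum_apply, Finset.sum_mul]
  exact Finset.sum_comm

lemma dotp_single {d : ℕ} (a : Fin d → ℝ) (j : Fin d) :
    dotp a (Pi.single j 1) = a j := by
  simp [dotp, Pi.single_apply]

-- relu lemmas
lemma two_relu (t : ℝ) : 2 * relu t = t + |t| := by
  rcases le_total t 0 with h | h
  · simp [relu, max_eq_right h, abs_of_nonpos h]
  · simp [relu, max_eq_left h, abs_of_nonneg h]; ring

lemma relu_neg (t : ℝ) : relu (-t) = relu t - t := by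
  rcases le_total t 0 with h | h
  · simp [relu, max_eq_left (neg_nonneg.mpr h), max_eq_right h]
  · simp [relu, max_eq_right (neg_nonpos.mpr h), max_eq_left h]

lemma relu_smul {t c : ℝ} (hc : 0 ≤ c) : relu (c * t) = c * relu t := by
  rcases le_total t 0 with h | h
  · simp [relu, max_eq_right h, max_eq_right (mul_nonpos_of_nonneg_of_nonpos hc h)]
  · simp [relu, max_eq_left h, max_eq_left (mul_nonneg hc h)]

-- abs identity
lemma abs_pair (x γ : ℝ) (h : |x| ≤ |γ|) : |x + γ| + |-x + γ| = 2 * |γ| := by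
  rcases le_total 0 γ with hγ | hγ
  · rw [abs_of_nonneg hγ] at h
    have h1 := abs_le.mp h
    rw [abs_of_nonneg hγ, abs_of_nonneg (by linarith), abs_of_nonneg (by linarith)]
    ring
  · rw [abs_of_nonpos hγ] at h
    have h1 := abs_le.mp h
    rw [abs_of_nonpos hγ, abs_of_nonpos (by linarith), abs_of_nonpos (by linarith)]
    ring

-- the kink lemma
lemma kink {ι : Type*} [Fintype ι] (C B Γ : ι → ℝ) (A B0 : ℝ)
    (h : ∀ t : ℝ, ∑ i, C i * |B i * t + Γ i| + (A * t + B0) = 0) :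
    ∑ i ∈ univ.filter (fun i => Γ i = 0), C i * |B i| = 0 := by
  classical
  -- choose δ
  set g : ι → ℝ := fun i => |Γ i| / (|B i| + 1) with hg
  set T : Finset ℝ := insert 1 ((univ.filter (fun i => Γ i ≠ 0)).image g) with hT
  have hTne : T.Nonempty := insert_nonempty _ _
  set δ : ℝ := T.min' hTne with hδdef
  have hδmem := T.min'_mem hTne
  have hδpos : 0 < δ := by
    rcases Finset.mem_insert.mp hδmem with h1 | h1
    · rw [hδdef, h1]; norm_num
    · obtain ⟨i, hi, hgi⟩ := Finset.mem_image.mp h1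
      have hΓ : Γ i ≠ 0 := (Finset.mem_filter.mp hi).2
      rw [hδdef, ← hgi]
      exact div_pos (abs_pos.mpr hΓ) (by positivity)
  have hsmall : ∀ i, Γ i ≠ 0 → |B i * δ| ≤ |Γ i| := by
    intro i hΓ
    have hle : δ ≤ g i := T.min'_le _ (Finset.mem_insert_of_mem
      (Finset.mem_image_of_mem g (Finset.mem_filter.mpr ⟨Finset.mem_univ i, hΓ⟩)))
    have hb : (0:ℝ) < |B i| + 1 := by positivity
    have : δ * (|B i| + 1) ≤ |Γ i| := (le_div_iff₀ hb).mp hle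
    rw [abs_mul, abs_of_pos hδpos]
    nlinarith [abs_nonneg (B i)]
  have h1 := h δ
  have h2 := h (-δ)
  have h3 := h 0
  simp only [mul_zero, zero_add] at h3
  have key : ∑ i, C i * (|B i * δ + Γ i| + |B i * (-δ) + Γ i| - 2 * |B i * 0 + Γ i|) = 0 := by
    have e : ∀ i : ι, C i * (|B i * δ + Γ i| + |B i * (-δ) + Γ i| - 2 * |B i * 0 + Γ i|)
        = C i * |B i * δ + Γ i| + C i * |B i * (-δ) + Γ i| - 2 * (C i * |B i * 0 + Γ i|) := by
      intro i; ring
    rw [Finset.sum_congr rfl (fun i _ => e i), Finset.sum_sub_distrib, Finset.sum_add_distrib,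
      ← Finset.mul_sum]
    simp only [mul_zero, zero_add]
    linarith
  rw [← Finset.sum_filter_add_sum_filter_not univ (fun i => Γ i = 0)] at key
  have keyB : ∑ i ∈ univ.filter (fun i => ¬ Γ i = 0),
      C i * (|B i * δ + Γ i| + |B i * (-δ) + Γ i| - 2 * |B i * 0 + Γ i|) = 0 := by
    apply Finset.sum_eq_zero
    intro i hi
    have hΓ : Γ i ≠ 0 := (Finset.mem_filter.mp hi).2
    have hap := abs_pair (B i * δ) (Γ i) (hsmall i hΓ)
    have e2 : B i * (-δ) = -(B i * δ) := by ring
    rw [e2, mul_zero, zero_add]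
    have hb : |B i * δ + Γ i| + |-(B i * δ) + Γ i| - 2 * |Γ i| = 0 := by linarith
    rw [hb, mul_zero]
  have keyA : ∑ i ∈ univ.filter (fun i => Γ i = 0),
      C i * (|B i * δ + Γ i| + |B i * (-δ) + Γ i| - 2 * |B i * 0 + Γ i|) =
      (2 * δ) * ∑ i ∈ univ.filter (fun i => Γ i = 0), C i * |B i| := by
    rw [Finset.mul_sum]
    apply Finset.sum_congr rfl
    intro i hi
    have hΓ : Γ i = 0 := (Finset.mem_filter.mp hi).2
    rw [hΓ, add_zero, add_zero, add_zero, mul_zero, abs_zero, abs_mul, abs_mul,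
      abs_of_pos hδpos, abs_neg, abs_of_pos hδpos]
    ring
  rw [keyA, keyB, add_zero] at key
  have := mul_eq_zero.mp key
  rcases this with h | h
  · linarith
  · exact h

-- common nonvanishing point on a hyperplane
lemma exists_pt {d : ℕ} {ι : Type*} [Fintype ι] (a : Fin d → ℝ) (b : ℝ) (ha : a ≠ 0)
    (A : ι → Fin d → ℝ) (B : ι → ℝ)
    (h : ∀ i, ∃ y, dotp a y + b = 0 ∧ dotp (A i) y + B i ≠ 0) :
    ∃ x, dotp a x + b = 0 ∧ ∀ i, dotp (A i) x + B i ≠ 0 := by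
  classical
  suffices H : ∀ S : Finset ι, ∃ x, dotp a x + b = 0 ∧ ∀ i ∈ S, dotp (A i) x + B i ≠ 0 by
    obtain ⟨x, hx1, hx2⟩ := H univ
    exact ⟨x, hx1, fun i => hx2 i (mem_univ i)⟩
  intro S
  induction S using Finset.induction_on with
  | empty =>
      refine ⟨(-b / dotp a a) • a, ?_, by simp⟩
      rw [dotp_smul_right, div_mul_cancel₀ _ (ne_of_gt (dotp_self_pos ha))]
      ring
  | insert _ _ hj ih =>
      rename_i j S
      obtain ⟨x, hx1, hx2⟩ := ih
      obtain ⟨y, hy1, hy2⟩ := h j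
      -- line through x and y
      set α : ι → ℝ := fun i => dotp (A i) y - dotp (A i) x with hα
      set γ : ι → ℝ := fun i => dotp (A i) x + B i with hγ
      set T : Finset ℝ := (insert j S).image (fun i => if α i = 0 then 2 else -γ i / α i) with hT
      obtain ⟨t, ht⟩ := Infinite.exists_notMem_finset T
      refine ⟨x + t • (y - x), ?_, ?_⟩
      · rw [dotp_add_right, dotp_smul_right, dotp_sub_right]
        have e0 : dotp a y - dotp a x = 0 := by linarith
        rw [e0, mul_zero]
        linarith
      · intro i hi
        have hval : dotp (A i) (x + t • (y - x)) + B i = α i * t + γ i := by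
          rw [dotp_add_right, dotp_smul_right, dotp_sub_right, hα, hγ]
          ring
        rw [hval]
        by_cases hcase : α i = 0
        · rw [hcase, zero_mul, zero_add]
          rcases Finset.mem_insert.mp hi with rfl | hiS
          · intro h0
            apply hy2
            have : dotp (A i) y = dotp (A i) x := by
              have := hcase
              rw [hα] at this
              simp only [sub_eq_zero] at this
              exact this
            rw [this]; exact h0
          · exact hx2 i hiS
        · intro h0
          apply ht
          have htv : t = -γ i / α i := by field_simp; linarith
          rw [hT]
          apply Finset.mem_image.mpr
          exact ⟨i, hi, by rw [if_neg hcase, ← htv]⟩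

-- if ℓ' vanishes on H(a,b) then proportional
lemma vanishOn {d : ℕ} {a : Fin d → ℝ} {b : ℝ} (ha : a ≠ 0) (A : Fin d → ℝ) (B : ℝ)
    (h : ∀ y, dotp a y + b = 0 → dotp A y + B = 0) :
    ∃ μ : ℝ, A = μ • a ∧ B = μ * b := by
  have hD : 0 < dotp a a := dotp_self_pos ha
  set x0 : Fin d → ℝ := (-b / dotp a a) • a with hx0
  have hx0H : dotp a x0 + b = 0 := by
    rw [hx0, dotp_smul_right]; field_simp; ring
  have hker : ∀ v, dotp a v = 0 → dotp A v = 0 := by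
    intro v hv
    have e1 : dotp a (x0 + v) + b = 0 := by
      rw [dotp_add_right, hv, add_zero]; exact hx0H
    have e2 : dotp a (x0 + (2:ℝ) • v) + b = 0 := by
      rw [dotp_add_right, dotp_smul_right a 2 v, hv, mul_zero, add_zero]; exact hx0H
    have h1 := h _ e1
    have h2 := h _ e2
    rw [dotp_add_right] at h1 h2
    rw [dotp_smul_right A 2 v] at h2
    linarith
  set μ : ℝ := dotp A a / dotp a a with hμ
  have hall : ∀ w, dotp A w = μ * dotp a w := by
    intro w
    have hv : dotp a (w - (dotp a w / dotp a a) • a) = 0 := by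
      rw [dotp_sub_right, dotp_smul_right]; field_simp; ring
    have := hker _ hv
    rw [dotp_sub_right, dotp_smul_right] at this
    rw [hμ]
    field_simp at this ⊢
    linarith
  refine ⟨μ, ?_, ?_⟩
  · funext j
    have := hall (Pi.single j 1)
    rw [dotp_single, dotp_single] at this
    simpa using this
  · have h1 : dotp A x0 + B = 0 := h x0 hx0H
    have h2 : dotp A x0 = μ * dotp a x0 := hall x0
    have h3 : dotp a x0 = -b := by linarith [hx0H]
    rw [h2, h3] at h1
    linarith

lemma hyperplane_smul {d : ℕ} (a : Fin d → ℝ) (b : ℝ) {μ : ℝ} (hμ : μ ≠ 0) :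
    hyperplane (μ • a) (μ * b) = hyperplane a b := by
  ext x
  simp only [hyperplane, Set.mem_setOf_eq, dotp_smul_left]
  constructor
  · intro h
    have : μ * (dotp a x + b) = 0 := by linarith
    rcases mul_eq_zero.mp this with h | h
    · exact absurd h hμ
    · exact h
  · intro h
    have : μ * (dotp a x + b) = 0 := by rw [h, mul_zero]
    linarith

-- irreducibility gives nonzero weights
lemma nonzero_of_irr {d m : ℕ} {a : Fin m → Fin d → ℝ} {b s : Fin m → ℝ} {c : ℝ}
    (h : IrreducibleNet m (reluNet a b s c)) (k : Fin m) : s k ≠ 0 ∧ a k ≠ 0 := by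
  by_contra hcon
  apply h
  have hk : s k = 0 ∨ a k = 0 := by tauto
  have hm : m ≠ 0 := fun h0 => (h0 ▸ k).elim0
  obtain ⟨n, rfl⟩ := Nat.exists_eq_succ_of_ne_zero hm
  refine ⟨n, Nat.lt_succ_self n, fun j => a (k.succAbove j), fun j => b (k.succAbove j),
    fun j => s (k.succAbove j), c + s k * relu (b k), fun x => ?_⟩
  unfold reluNet
  rw [Fin.sum_univ_succAbove (fun i => s i * relu (dotp (a i) x + b i)) k]
  have hterm : s k * relu (dotp (a k) x + b k) = s k * relu (b k) := by
    rcases hk with hk | hk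
    · rw [hk, zero_mul, zero_mul]
    · have : dotp (a k) x = 0 := by
        rw [hk]; simp [dotp]
      rw [this, zero_add]
  rw [hterm]
  ring

-- kink extraction along a line, combined family
lemma line_kink {d m m' : ℕ} (a : Fin m → Fin d → ℝ) (b s : Fin m → ℝ)
    (a' : Fin m' → Fin d → ℝ) (b' s' : Fin m' → ℝ) (p : Fin d → ℝ) (q : ℝ)
    (hG : ∀ x, (∑ k, s k * |dotp (a k) x + b k|) - (∑ j, s' j * |dotp (a' j) x + b' j|)
      + (dotp p x + q) = 0)
    (xs v : Fin d → ℝ) :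
    ∑ i ∈ (univ : Finset (Fin m ⊕ Fin m')).filter
        (fun i => Sum.elim (fun k => dotp (a k) xs + b k) (fun j => dotp (a' j) xs + b' j) i = 0),
      (Sum.elim s (fun j => -s' j) i) *
        |Sum.elim (fun k => dotp (a k) v) (fun j => dotp (a' j) v) i| = 0 := by
  apply kink _ _ _ (dotp p v) (dotp p xs + q)
  intro t
  rw [Fintype.sum_sum_type]
  have e1 : ∀ u : Fin d → ℝ, ∀ r : ℝ, dotp u (xs + t • v) + r = dotp u v * t + (dotp u xs + r) := by
    intro u r
    rw [dotp_add_right, dotp_smul_right]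
    ring
  have := hG (xs + t • v)
  rw [e1 p q] at this
  simp only [Sum.elim_inl, Sum.elim_inr]
  have e2 : ∀ k : Fin m, s k * |dotp (a k) v * t + (dotp (a k) xs + b k)|
      = s k * |dotp (a k) (xs + t • v) + b k| := by
    intro k; rw [e1]
  have e3 : ∀ j : Fin m', (-s' j) * |dotp (a' j) v * t + (dotp (a' j) xs + b' j)|
      = -(s' j * |dotp (a' j) (xs + t • v) + b' j|) := by
    intro j; rw [e1]; ring
  rw [Finset.sum_congr rfl (fun k _ => e2 k), Finset.sum_congr rfl (fun j _ => e3 j),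
    Finset.sum_neg_distrib]
  linarith

lemma exists_witness {d : ℕ} {a : Fin d → ℝ} {b : ℝ} (ha : a ≠ 0) {A : Fin d → ℝ} {B : ℝ}
    (hA : A ≠ 0) (hne : hyperplane A B ≠ hyperplane a b) :
    ∃ y, dotp a y + b = 0 ∧ dotp A y + B ≠ 0 := by
  by_contra hc
  push_neg at hc
  obtain ⟨μ, hA', hB'⟩ := vanishOn ha A B hc
  have hμ : μ ≠ 0 := by
    rintro rfl
    apply hA
    rw [hA', zero_smul]
  exact hne (by rw [hA', hB']; exact hyperplane_smul a b hμ)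

lemma matchData {d m m' : ℕ} (a : Fin m → Fin d → ℝ) (b s : Fin m → ℝ)
    (a' : Fin m' → Fin d → ℝ) (b' s' : Fin m' → ℝ) (p : Fin d → ℝ) (q : ℝ)
    (hG : ∀ x, (∑ k, s k * |dotp (a k) x + b k|) - (∑ j, s' j * |dotp (a' j) x + b' j|)
      + (dotp p x + q) = 0)
    (hs : ∀ k, s k ≠ 0) (ha : ∀ k, a k ≠ 0) (ha' : ∀ j, a' j ≠ 0)
    (hH : ∀ k1 k2 : Fin m, k1 ≠ k2 → hyperplane (a k1) (b k1) ≠ hyperplane (a k2) (b k2))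
    (hH' : ∀ k1 k2 : Fin m', k1 ≠ k2 → hyperplane (a' k1) (b' k1) ≠ hyperplane (a' k2) (b' k2))
    (k : Fin m) :
    ∃ (j : Fin m') (μ : ℝ), μ ≠ 0 ∧ a' j = μ • a k ∧ b' j = μ * b k ∧ s k = |μ| * s' j := by
  classical
  have hD : 0 < dotp (a k) (a k) := dotp_self_pos (ha k)
  -- step 1: find a matching hyperplane
  have step1 : ∃ j, hyperplane (a' j) (b' j) = hyperplane (a k) (b k) := by
    by_contra hc
    push_neg at hc
    obtain ⟨xs, hxs0, hxsne⟩ := exists_pt (a k) (b k) (ha k)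
      (Sum.elim (fun i : {i : Fin m // i ≠ k} => a i.1) a')
      (Sum.elim (fun i : {i : Fin m // i ≠ k} => b i.1) b')
      (by
        rintro (⟨i, hik⟩ | j)
        · exact exists_witness (ha k) (ha i) (hH i k hik)
        · exact exists_witness (ha k) (ha' j) (hc j))
    have hk := line_kink a b s a' b' s' p q hG xs (a k)
    have hfil : ((univ : Finset (Fin m ⊕ Fin m')).filter
        (fun i => Sum.elim (fun k' => dotp (a k') xs + b k') (fun j => dotp (a' j) xs + b' j) i = 0))
        = {Sum.inl k} := by
      ext i
      simp only [mem_filter, mem_univ, true_and, mem_singleton]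
      cases i with
      | inl i =>
        constructor
        · intro h0
          by_contra hik
          have hik' : i ≠ k := fun h => hik (by rw [h])
          exact hxsne (Sum.inl ⟨i, hik'⟩) h0
        · intro h
          rw [Sum.inl.injEq] at h
          subst h
          exact hxs0
      | inr j =>
        simp only [Sum.elim_inr]
        constructor
        · intro h0
          exact absurd h0 (hxsne (Sum.inr j))
        · intro h
          exact absurd h (by simp)
    rw [hfil, Finset.sum_singleton] at hk
    simp only [Sum.elim_inl] at hk
    rcases mul_eq_zero.mp hk with h | h
    · exact hs k h
    · rw [abs_of_pos hD] at h
      linarith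
  obtain ⟨j, hj⟩ := step1
  -- step 2: proportionality
  have hvan : ∀ y, dotp (a k) y + b k = 0 → dotp (a' j) y + b' j = 0 := by
    intro y hy
    have : y ∈ hyperplane (a' j) (b' j) := by
      rw [hj]
      exact hy
    exact this
  obtain ⟨μ, hA, hB⟩ := vanishOn (ha k) (a' j) (b' j) hvan
  have hμ : μ ≠ 0 := by
    rintro rfl
    apply ha' j
    rw [hA, zero_smul]
  -- step 3: slope matching via kink at the shared hyperplane
  obtain ⟨xs, hxs0, hxsne⟩ := exists_pt (a k) (b k) (ha k)
    (Sum.elim (fun i : {i : Fin m // i ≠ k} => a i.1) (fun i : {i : Fin m' // i ≠ j} => a' i.1))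
    (Sum.elim (fun i : {i : Fin m // i ≠ k} => b i.1) (fun i : {i : Fin m' // i ≠ j} => b' i.1))
    (by
      rintro (⟨i, hik⟩ | ⟨i, hij⟩)
      · exact exists_witness (ha k) (ha i) (hH i k hik)
      · refine exists_witness (ha k) (ha' i) ?_
        rw [← hj]
        exact hH' i j hij)
  have hk := line_kink a b s a' b' s' p q hG xs (a k)
  have hfil : ((univ : Finset (Fin m ⊕ Fin m')).filter
      (fun i => Sum.elim (fun k' => dotp (a k') xs + b k') (fun j' => dotp (a' j') xs + b' j') i = 0))
      = {Sum.inl k, Sum.inr j} := by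
    ext i
    simp only [mem_filter, mem_univ, true_and, mem_insert, mem_singleton]
    cases i with
    | inl i =>
      simp only [Sum.elim_inl]
      constructor
      · intro h0
        left
        by_contra hik
        have hik' : i ≠ k := fun h => hik (by rw [h])
        exact hxsne (Sum.inl ⟨i, hik'⟩) h0
      · rintro (h | h)
        · rw [Sum.inl.injEq] at h
          subst h
          exact hxs0
        · exact absurd h (by simp)
    | inr i =>
      simp only [Sum.elim_inr]
      constructor
      · intro h0
        right
        by_contra hij
        have hij' : i ≠ j := fun h => hij (by rw [h])
        exact hxsne (Sum.inr ⟨i, hij'⟩) h0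
      · rintro (h | h)
        · exact absurd h (by simp)
        · rw [Sum.inr.injEq] at h
          subst h
          rw [hA, hB, dotp_smul_left]
          have : dotp (a k) xs = -(b k) := by linarith
          rw [this]
          ring
  rw [hfil] at hk
  rw [Finset.sum_pair (by simp)] at hk
  simp only [Sum.elim_inl, Sum.elim_inr] at hk
  rw [hA, dotp_smul_left, abs_mul, abs_of_pos hD] at hk
  refine ⟨j, μ, hμ, hA, hB, ?_⟩
  have h2 : (s k - |μ| * s' j) * dotp (a k) (a k) = 0 := by ring_nf; ring_nf at hk; linarith
  rcases mul_eq_zero.mp h2 with h | h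
  · linarith
  · linarith

lemma dotp_sub_left {d : ℕ} (u w x : Fin d → ℝ) : dotp (u - w) x = dotp u x - dotp w x := by
  simp [dotp, sub_mul, Finset.sum_sub_distrib]

lemma two_sum_relu {n : ℕ} (S L : Fin n → ℝ) :
    2 * ∑ k, S k * relu (L k) = ∑ k, S k * L k + ∑ k, S k * |L k| := by
  rw [Finset.mul_sum, ← Finset.sum_add_distrib]
  refine Finset.sum_congr rfl fun k _ => ?_
  calc 2 * (S k * relu (L k)) = S k * (2 * relu (L k)) := by ring
    _ = S k * (L k + |L k|) := by rw [two_relu]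
    _ = S k * L k + S k * |L k| := by ring

lemma abs_form {d m m' : ℕ} (a : Fin m → Fin d → ℝ) (b s : Fin m → ℝ) (c : ℝ)
    (a' : Fin m' → Fin d → ℝ) (b' s' : Fin m' → ℝ) (c' : ℝ)
    (heq : ∀ x, reluNet a b s c x = reluNet a' b' s' c' x) :
    ∀ x, (∑ k, s k * |dotp (a k) x + b k|) - (∑ j, s' j * |dotp (a' j) x + b' j|)
      + (dotp ((∑ k, s k • a k) - (∑ j, s' j • a' j)) x
        + ((∑ k, s k * b k) - (∑ j, s' j * b' j) + 2*c - 2*c')) = 0 := by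
  intro x
  have e1 := two_sum_relu s (fun k => dotp (a k) x + b k)
  have e2 := two_sum_relu s' (fun j => dotp (a' j) x + b' j)
  have e3 : ∑ k, s k * (dotp (a k) x + b k)
      = ∑ k, s k * dotp (a k) x + ∑ k, s k * b k := by
    rw [← Finset.sum_add_distrib]
    exact Finset.sum_congr rfl fun k _ => by ring
  have e4 : ∑ j, s' j * (dotp (a' j) x + b' j)
      = ∑ j, s' j * dotp (a' j) x + ∑ j, s' j * b' j := by
    rw [← Finset.sum_add_distrib]
    exact Finset.sum_congr rfl fun j _ => by ring
  have e5 : dotp ((∑ k, s k • a k) - (∑ j, s' j • a' j)) x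
      = ∑ k, s k * dotp (a k) x - ∑ j, s' j * dotp (a' j) x := by
    rw [dotp_sub_left, dotp_sum_left, dotp_sum_left]
    rw [Finset.sum_congr rfl (fun k _ => dotp_smul_left (s k) (a k) x),
      Finset.sum_congr rfl (fun j _ => dotp_smul_left (s' j) (a' j) x)]
  have h0 := heq x
  unfold reluNet at h0
  rw [e3] at e1
  rw [e4] at e2
  rw [e5]
  linarith

lemma neuron_eq {ε lam t s : ℝ} (hε : ε = 1 ∨ ε = -1) (hlam : 0 < lam) :
    (s / lam) * relu (ε * lam * t) = s * relu t - (if ε = -1 then s * t else 0) := by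
  rcases hε with rfl | rfl
  · rw [if_neg (by norm_num), one_mul, relu_smul hlam.le]
    field_simp
    ring
  · rw [if_pos rfl]
    have e : (-1 : ℝ) * lam * t = -(lam * t) := by ring
    rw [e, relu_neg, relu_smul hlam.le]
    field_simp

lemma sum_reindex {d m m' : ℕ} (a : Fin m → Fin d → ℝ) (b s : Fin m → ℝ)
    (a' : Fin m' → Fin d → ℝ) (b' s' : Fin m' → ℝ)
    (π : Fin m → Fin m') (hbij : Function.Bijective π) (ε lam : Fin m → ℝ)
    (hε : ∀ k, ε k = 1 ∨ ε k = -1) (hlam : ∀ k, 0 < lam k)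
    (hdata : ∀ k, (ε k * lam k) • a k = a' (π k) ∧ ε k * lam k * b k = b' (π k) ∧
      s k / lam k = s' (π k)) (x : Fin d → ℝ) :
    ∑ j, s' j * relu (dotp (a' j) x + b' j)
      = ∑ k, s k * relu (dotp (a k) x + b k)
        - ∑ k ∈ univ.filter (fun k => ε k = -1), s k * (dotp (a k) x + b k) := by
  have hre := Equiv.sum_comp (Equiv.ofBijective π hbij)
    (fun j => s' j * relu (dotp (a' j) x + b' j))
  rw [← hre]
  simp only [Equiv.ofBijective_apply]
  have per : ∀ k, s' (π k) * relu (dotp (a' (π k)) x + b' (π k))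
      = s k * relu (dotp (a k) x + b k)
        - (if ε k = -1 then s k * (dotp (a k) x + b k) else 0) := by
    intro k
    obtain ⟨h1, h2, h3⟩ := hdata k
    rw [← h1, ← h2, ← h3, dotp_smul_left]
    have e : ε k * lam k * dotp (a k) x + ε k * lam k * b k
        = ε k * lam k * (dotp (a k) x + b k) := by ring
    rw [e]
    exact neuron_eq (hε k) (hlam k)
  rw [Finset.sum_congr rfl (fun k _ => per k), Finset.sum_sub_distrib, ← Finset.sum_filter]


lemma dotp_zero_left {d : ℕ} (x : Fin d → ℝ) : dotp (0 : Fin d → ℝ) x = 0 := by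
  simp [dotp]

lemma sum_affine_const {d : ℕ} {ι : Type*} (K : Finset ι) (S : ι → ℝ) (aa : ι → Fin d → ℝ)
    (bb : ι → ℝ) (C : ℝ) (h : ∀ x, ∑ k ∈ K, S k * (dotp (aa k) x + bb k) = C) :
    (∑ k ∈ K, S k • aa k) = 0 ∧ C = ∑ k ∈ K, S k * bb k := by
  have hW : ∀ x, dotp (∑ k ∈ K, S k • aa k) x + ∑ k ∈ K, S k * bb k = C := by
    intro x
    rw [dotp_sum_left, Finset.sum_congr rfl (fun k _ => dotp_smul_left (S k) (aa k) x),
      ← Finset.sum_add_distrib, ← h x]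
    exact Finset.sum_congr rfl fun k _ => by ring
  have h0 := hW 0
  rw [dotp_zero_right, zero_add] at h0
  refine ⟨?_, h0.symm⟩
  by_contra hne
  have hpos := dotp_self_pos hne
  have h1 := hW (∑ k ∈ K, S k • aa k)
  linarith

/-- Characterization of the equivalence of two irreducible shallow ReLU networks with
mutually distinct hyperplanes. -/
theorem stmt5 {d m m' : ℕ}
    (a : Fin m → Fin d → ℝ) (b s : Fin m → ℝ) (c : ℝ)
    (a' : Fin m' → Fin d → ℝ) (b' s' : Fin m' → ℝ) (c' : ℝ)
    (h_irr : IrreducibleNet m (reluNet a b s c))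
    (h_irr' : IrreducibleNet m' (reluNet a' b' s' c'))
    (hH : ∀ k1 k2 : Fin m, k1 ≠ k2 →
      hyperplane (a k1) (b k1) ≠ hyperplane (a k2) (b k2))
    (hH' : ∀ k1 k2 : Fin m', k1 ≠ k2 →
      hyperplane (a' k1) (b' k1) ≠ hyperplane (a' k2) (b' k2)) :
    (∀ x, reluNet a b s c x = reluNet a' b' s' c' x) ↔
      (m = m' ∧
        ∃ (π : Fin m → Fin m') (ε lam : Fin m → ℝ),
          Function.Bijective π ∧
          (∀ k, ε k = 1 ∨ ε k = -1) ∧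
          (∀ k, 0 < lam k) ∧
          (∀ k, (ε k * lam k) • a k = a' (π k) ∧ ε k * lam k * b k = b' (π k) ∧
            s k / lam k = s' (π k)) ∧
          (∑ k ∈ univ.filter (fun k => ε k = -1), s k • a k) = 0 ∧
          c' = c + ∑ k ∈ univ.filter (fun k => ε k = -1), s k * b k) := by
  constructor
  · intro heq
    have hs : ∀ k, s k ≠ 0 := fun k => (nonzero_of_irr h_irr k).1
    have ha : ∀ k, a k ≠ 0 := fun k => (nonzero_of_irr h_irr k).2
    have hs' : ∀ j, s' j ≠ 0 := fun j => (nonzero_of_irr h_irr' j).1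
    have ha' : ∀ j, a' j ≠ 0 := fun j => (nonzero_of_irr h_irr' j).2
    have hG := abs_form a b s c a' b' s' c' heq
    have hG' := abs_form a' b' s' c' a b s c (fun x => (heq x).symm)
    choose π μ hμ hA hB hS using
      matchData a b s a' b' s' _ _ hG hs ha ha' hH hH'
    choose π' μ' hμ' hA' hB' hS' using
      matchData a' b' s' a b s _ _ hG' hs' ha' ha hH' hH
    have hπH : ∀ k, hyperplane (a' (π k)) (b' (π k)) = hyperplane (a k) (b k) := by
      intro k
      rw [hA k, hB k]
      exact hyperplane_smul _ _ (hμ k)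
    have hπ'H : ∀ j, hyperplane (a (π' j)) (b (π' j)) = hyperplane (a' j) (b' j) := by
      intro j
      rw [hA' j, hB' j]
      exact hyperplane_smul _ _ (hμ' j)
    have hbij : Function.Bijective π := by
      constructor
      · intro k1 k2 h12
        by_contra hne
        exact hH k1 k2 hne (by rw [← hπH k1, ← hπH k2, h12])
      · intro j
        refine ⟨π' j, ?_⟩
        by_contra hne
        exact hH' (π (π' j)) j hne (by rw [hπH (π' j), hπ'H j])
    have hmm : m = m' := by
      have := Fintype.card_of_bijective hbij
      simpa using this
    set ε : Fin m → ℝ := fun k => if 0 < μ k then 1 else -1 with hεdef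
    set lam : Fin m → ℝ := fun k => |μ k| with hlamdef
    have hεpm : ∀ k, ε k = 1 ∨ ε k = -1 := by
      intro k
      by_cases h : 0 < μ k
      · left; simp [hεdef, h]
      · right; simp [hεdef, h]
    have hlampos : ∀ k, 0 < lam k := fun k => abs_pos.mpr (hμ k)
    have hεlam : ∀ k, ε k * lam k = μ k := by
      intro k
      by_cases h : 0 < μ k
      · simp [hεdef, hlamdef, h, abs_of_pos h]
      · have hneg : μ k < 0 := lt_of_le_of_ne (not_lt.mp h) (hμ k)
        simp [hεdef, hlamdef, h, abs_of_neg hneg]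
    have hdata : ∀ k, (ε k * lam k) • a k = a' (π k) ∧ ε k * lam k * b k = b' (π k) ∧
        s k / lam k = s' (π k) := by
      intro k
      refine ⟨by rw [hεlam k, ← hA k], by rw [hεlam k, ← hB k], ?_⟩
      rw [hS k]
      exact mul_div_cancel_left₀ _ (ne_of_gt (abs_pos.mpr (hμ k)))
    refine ⟨hmm, π, ε, lam, hbij, hεpm, hlampos, hdata, ?_⟩
    have hlin : ∀ x, ∑ k ∈ univ.filter (fun k => ε k = -1),
        s k * (dotp (a k) x + b k) = c' - c := by
      intro x
      have h1 := heq x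
      unfold reluNet at h1
      have h2 := sum_reindex a b s a' b' s' π hbij ε lam hεpm hlampos hdata x
      rw [h2] at h1
      linarith
    obtain ⟨hW, hC⟩ := sum_affine_const _ s a b (c' - c) hlin
    exact ⟨hW, by linarith⟩
  · rintro ⟨hmm, π, ε, lam, hbij, hεpm, hlampos, hdata, hW, hC⟩
    intro x
    unfold reluNet
    rw [sum_reindex a b s a' b' s' π hbij ε lam hεpm hlampos hdata x]
    have hKb : ∑ k ∈ univ.filter (fun k => ε k = -1), s k * (dotp (a k) x + b k)
        = ∑ k ∈ univ.filter (fun k => ε k = -1), s k * b k := by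
      have e : ∑ k ∈ univ.filter (fun k => ε k = -1), s k * (dotp (a k) x + b k)
          = dotp (∑ k ∈ univ.filter (fun k => ε k = -1), s k • a k) x
            + ∑ k ∈ univ.filter (fun k => ε k = -1), s k * b k := by
        rw [dotp_sum_left, Finset.sum_congr rfl
          (fun k _ => dotp_smul_left (s k) (a k) x), ← Finset.sum_add_distrib]
        exact Finset.sum_congr rfl fun k _ => by ring
      rw [e, hW, dotp_zero_left, zero_add]
    rw [hKb, hC]
    ring
end

section
/- Let f_N : ℝ^d → ℝ be an irreducible shallow ReLU network with m neurons whose hyperplanes H(a_k,b_k), k = 1,…,m, are mutually distinct, and let L_1, …, L_{md} be a collection of lines feasible with respect to f_N, with intersection points z_{j,k} = L_j ∩ H(a_k,b_k) for 1 ≤ j ≤ md, 1 ≤ k ≤ m. Then for any subset Z_0 of the intersection points {z_{j,k}} with cardinality #Z_0 = md, exactly one of the following holds: either Z_0 ⊆ H(a_{k_0}, b_{k_0}) for some k_0 ∈ {1,…,m}, or Z_0 is not contained in any hyperplane H(a,b) with a ∈ ℝ^d \ {0} and b ∈ ℝ. -/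
open Finset

/-- The line `{u + t·v : t ∈ ℝ}`. -/
def line {d : ℕ} (u v : Fin d → ℝ) : Set (Fin d → ℝ) :=
  {x | ∃ t : ℝ, x = u + t • v}

/-- The collection of `m·d` lines `L_j = {u_j + t·v_j}`, together with the intersection
points `z j k = L_j ∩ H(a_k, b_k)`, is feasible with respect to the hyperplanes
`H(a_k, b_k)`:
(i) the directions `v_j` span `ℝ^d` (rank `d`);
(ii) each line meets each hyperplane in exactly the point `z j k`, and all these points
are mutually distinct;
(iii) any `d` distinct intersection points lying in a common hyperplane `H(a_k0, b_k0)`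
have differences spanning a `(d−1)`-dimensional space. -/
def FeasibleLines {d m : ℕ} (a : Fin m → Fin d → ℝ) (b : Fin m → ℝ)
    (u v : Fin (m * d) → Fin d → ℝ) (z : Fin (m * d) → Fin m → Fin d → ℝ) : Prop :=
  (Submodule.span ℝ (Set.range v) = ⊤) ∧
  (∀ (j : Fin (m * d)) (k : Fin m),
    line (u j) (v j) ∩ hyperplane (a k) (b k) = {z j k}) ∧
  (Function.Injective fun p : Fin (m * d) × Fin m => z p.1 p.2) ∧
  (∀ (k0 : Fin m) (w : Fin d → Fin (m * d) × Fin m),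
    Function.Injective (fun i => z (w i).1 (w i).2) →
    (∀ i, z (w i).1 (w i).2 ∈ hyperplane (a k0) (b k0)) →
    Module.finrank ℝ
      ↥(vectorSpan ℝ (Set.range fun i : Fin d => z (w i).1 (w i).2)) = d - 1)


noncomputable def phiL {d : ℕ} (a : Fin d → ℝ) : (Fin d → ℝ) →ₗ[ℝ] ℝ where
  toFun x := dotp a x
  map_add' x y := by simp [dotp, mul_add, Finset.sum_add_distrib]
  map_smul' r x := by simp [dotp, Finset.mul_sum, mul_left_comm]

lemma finrank_ker_phiL {d : ℕ} {a : Fin d → ℝ} (ha : a ≠ 0) :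
    Module.finrank ℝ (LinearMap.ker (phiL a)) = d - 1 := by
  obtain ⟨i, hi⟩ := Function.ne_iff.mp ha
  have hi' : a i ≠ 0 := hi
  have hrange : LinearMap.range (phiL a) = ⊤ := by
    rw [Submodule.eq_top_iff']
    intro r
    refine ⟨(r / a i) • (Pi.single i 1 : Fin d → ℝ), ?_⟩
    simp only [phiL, LinearMap.coe_mk, AddHom.coe_mk, dotp, Pi.smul_apply, Pi.single_apply,
      smul_eq_mul, mul_ite, mul_one, mul_zero]
    rw [Finset.sum_eq_single i]
    · field_simp; simp
    · intro j _ hj; simp [hj]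
    · simp
  have h1 := LinearMap.finrank_range_add_finrank_ker (phiL a)
  rw [hrange, finrank_top] at h1
  simp [Module.finrank_self] at h1
  have hd : Module.finrank ℝ (Fin d → ℝ) = d := by simp
  omega

lemma mem_hyperplane_iff {d : ℕ} {a : Fin d → ℝ} {b : ℝ} {x : Fin d → ℝ} :
    x ∈ hyperplane a b ↔ phiL a x = -b := by
  simp [hyperplane, phiL, dotp, eq_neg_iff_add_eq_zero]

lemma vectorSpan_le_ker {d : ℕ} {a : Fin d → ℝ} {b : ℝ} {S : Set (Fin d → ℝ)}
    (h : S ⊆ hyperplane a b) : vectorSpan ℝ S ≤ LinearMap.ker (phiL a) := by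
  rw [vectorSpan_def, Submodule.span_le]
  rintro t ht
  rw [Set.mem_vsub] at ht
  obtain ⟨x, hx, y, hy, rfl⟩ := ht
  have hx' := mem_hyperplane_iff.mp (h hx)
  have hy' := mem_hyperplane_iff.mp (h hy)
  simp only [SetLike.mem_coe, LinearMap.mem_ker, vsub_eq_sub, map_sub, hx', hy', sub_self]

lemma hyperplane_eq_of_ker_eq {d : ℕ} {a0 a1 : Fin d → ℝ} {b0 b1 : ℝ} {x0 : Fin d → ℝ}
    (h0 : x0 ∈ hyperplane a0 b0) (h1 : x0 ∈ hyperplane a1 b1)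
    (hker : LinearMap.ker (phiL a0) = LinearMap.ker (phiL a1)) :
    hyperplane a0 b0 = hyperplane a1 b1 := by
  ext x
  rw [mem_hyperplane_iff, mem_hyperplane_iff, ← mem_hyperplane_iff.mp h0,
    ← mem_hyperplane_iff.mp h1]
  constructor
  · intro h
    have : x - x0 ∈ LinearMap.ker (phiL a0) := by simp [h]
    rw [hker, LinearMap.mem_ker, map_sub, sub_eq_zero] at this
    exact this
  · intro h
    have : x - x0 ∈ LinearMap.ker (phiL a1) := by simp [h]
    rw [← hker, LinearMap.mem_ker, map_sub, sub_eq_zero] at this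
    exact this

lemma neuron_ne_zero {d m : ℕ} (a : Fin m → Fin d → ℝ) (b s : Fin m → ℝ) (c : ℝ)
    (h_irr : IrreducibleNet m (reluNet a b s c)) (k : Fin m) : a k ≠ 0 := by
  intro hk
  apply h_irr
  have hmpos : 0 < m := k.pos
  obtain ⟨n, rfl⟩ : ∃ n, m = n + 1 := ⟨m - 1, by omega⟩
  refine ⟨n, by omega, fun i => a (k.succAbove i), fun i => b (k.succAbove i),
    fun i => s (k.succAbove i), c + s k * relu (b k), fun x => ?_⟩
  unfold reluNet
  rw [Fin.sum_univ_succAbove (fun i => s i * relu (dotp (a i) x + b i)) k]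
  have : dotp (a k) x = 0 := by simp [hk, dotp]
  rw [this]
  ring


/-- For any `m·d`-element subset `Z0` of the intersection points, exactly one of the
following holds: `Z0` lies in one of the network hyperplanes `H(a_k0, b_k0)`, or `Z0`
is not contained in any hyperplane `H(a,b)` with `a ≠ 0`. -/
theorem stmt7 {d m : ℕ} (a : Fin m → Fin d → ℝ) (b s : Fin m → ℝ) (c : ℝ)
    (h_irr : IrreducibleNet m (reluNet a b s c))
    (hH : ∀ k1 k2 : Fin m, k1 ≠ k2 →
      hyperplane (a k1) (b k1) ≠ hyperplane (a k2) (b k2))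
    (u v : Fin (m * d) → Fin d → ℝ) (z : Fin (m * d) → Fin m → Fin d → ℝ)
    (hfeas : FeasibleLines a b u v z)
    (Z0 : Finset (Fin d → ℝ))
    (hZ0sub : (↑Z0 : Set (Fin d → ℝ)) ⊆
      Set.range (fun p : Fin (m * d) × Fin m => z p.1 p.2))
    (hZ0card : Z0.card = m * d) :
    Xor' (∃ k0 : Fin m, (↑Z0 : Set (Fin d → ℝ)) ⊆ hyperplane (a k0) (b k0))
      (∀ (a0 : Fin d → ℝ), a0 ≠ 0 → ∀ b0 : ℝ,
        ¬ (↑Z0 : Set (Fin d → ℝ)) ⊆ hyperplane a0 b0) := by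
  have hA : ∀ k, a k ≠ 0 := neuron_ne_zero a b s c h_irr
  by_cases hfirst : ∃ k0 : Fin m, (↑Z0 : Set (Fin d → ℝ)) ⊆ hyperplane (a k0) (b k0)
  · left
    refine ⟨hfirst, ?_⟩
    intro h2
    obtain ⟨k0, hsub⟩ := hfirst
    exact h2 (a k0) (hA k0) (b k0) hsub
  · right
    refine ⟨?_, hfirst⟩
    intro a0 ha0 b0 hsub
    apply hfirst
    -- d ≥ 1
    have hd : 0 < d := by
      rcases Nat.eq_zero_or_pos d with hd0 | hd
      · exact absurd (funext fun i => (Fin.elim0 (hd0 ▸ i))) ha0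
      · exact hd
    haveI : Nonempty (Fin d) := ⟨⟨0, hd⟩⟩
    -- m ≥ 1
    have hm : 0 < m := by
      rcases Nat.eq_zero_or_pos m with hm0 | hm
      · exfalso
        have hv := hfeas.1
        have : Set.range v = ∅ := by
          rw [Set.range_eq_empty_iff]
          subst hm0
          exact ⟨fun j => absurd j.2 (by simp)⟩
        rw [this, Submodule.span_empty] at hv
        exact absurd hv (by simp [bot_ne_top])
      · exact hm
    -- choice of index pairs
    let px : (Fin d → ℝ) → Fin (m * d) × Fin m := fun x =>
      if h : ∃ p : Fin (m * d) × Fin m, z p.1 p.2 = x then h.choose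
      else (⟨0, Nat.mul_pos hm hd⟩, ⟨0, hm⟩)
    have hpx : ∀ x ∈ Z0, z (px x).1 (px x).2 = x := by
      intro x hx
      have h : ∃ p : Fin (m * d) × Fin m, z p.1 p.2 = x := hZ0sub hx
      simp only [px, dif_pos h]
      exact h.choose_spec
    haveI : Nonempty (Fin m) := ⟨⟨0, hm⟩⟩
    -- pigeonhole
    obtain ⟨k0, -, hk0⟩ := Finset.exists_le_card_fiber_of_mul_le_card_of_maps_to
      (f := fun x => (px x).2) (t := (Finset.univ : Finset (Fin m)))
      (fun x _ => Finset.mem_univ _) Finset.univ_nonempty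
      (by rw [Finset.card_univ, Fintype.card_fin, hZ0card])
    obtain ⟨F', hF'sub, hF'card⟩ := Finset.exists_subset_card_eq hk0
    have hF'sub' : F' ⊆ Z0 := hF'sub.trans (Finset.filter_subset _ _)
    let e : Fin d ≃ F' := (F'.equivFinOfCardEq hF'card).symm
    let pt : Fin d → (Fin d → ℝ) := fun i => (e i : Fin d → ℝ)
    have hpt_inj : Function.Injective pt :=
      Subtype.val_injective.comp e.injective
    have hptZ0 : ∀ i, pt i ∈ Z0 := fun i => hF'sub' (e i).2
    have hptk0 : ∀ i, (px (pt i)).2 = k0 := fun i =>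
      (Finset.mem_filter.mp (hF'sub (e i).2)).2
    let w : Fin d → Fin (m * d) × Fin m := fun i => px (pt i)
    have hzw : ∀ i, z (w i).1 (w i).2 = pt i := fun i => hpx _ (hptZ0 i)
    have hzmem : ∀ (j : Fin (m * d)) (k : Fin m), z j k ∈ hyperplane (a k) (b k) := by
      intro j k
      have h1 : z j k ∈ ({z j k} : Set (Fin d → ℝ)) := rfl
      rw [← hfeas.2.1 j k] at h1
      exact h1.2
    have hinj : Function.Injective (fun i => z (w i).1 (w i).2) := by
      have : (fun i => z (w i).1 (w i).2) = pt := funext hzw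
      rw [this]; exact hpt_inj
    have hmem : ∀ i, z (w i).1 (w i).2 ∈ hyperplane (a k0) (b k0) := by
      intro i
      have hk : (w i).2 = k0 := hptk0 i
      rw [hk]
      exact hzmem _ _
    have hrank := hfeas.2.2.2 k0 w hinj hmem
    have hfun : (fun i => z (w i).1 (w i).2) = pt := funext hzw
    rw [hfun] at hrank
    -- spans
    have hsub0 : Set.range pt ⊆ hyperplane a0 b0 := by
      rintro x ⟨i, rfl⟩; exact hsub (hptZ0 i)
    have hsubk : Set.range pt ⊆ hyperplane (a k0) (b k0) := by
      rintro x ⟨i, rfl⟩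
      have := hmem i; rwa [hzw i] at this
    have hle0 := vectorSpan_le_ker hsub0
    have hlek := vectorSpan_le_ker hsubk
    have heq0 : vectorSpan ℝ (Set.range pt) = LinearMap.ker (phiL a0) :=
      Submodule.eq_of_le_of_finrank_eq hle0 (by rw [hrank, finrank_ker_phiL ha0])
    have heqk : vectorSpan ℝ (Set.range pt) = LinearMap.ker (phiL (a k0)) :=
      Submodule.eq_of_le_of_finrank_eq hlek (by rw [hrank, finrank_ker_phiL (hA k0)])
    have hker : LinearMap.ker (phiL a0) = LinearMap.ker (phiL (a k0)) :=
      heq0 ▸ heqk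
    obtain ⟨i0⟩ := (inferInstance : Nonempty (Fin d))
    have hHeq : hyperplane a0 b0 = hyperplane (a k0) (b k0) :=
      hyperplane_eq_of_ker_eq (hsub0 ⟨i0, rfl⟩) (hsubk ⟨i0, rfl⟩) hker
    exact ⟨k0, hHeq ▸ hsub⟩
end

section
/- For each j ∈ {1,…,m}, let f_j(x) := 1/(1 + exp(−a_j·x − b_j)) with a_j, b_j ∈ ℝ. Assume a_j ≠ 0 for all j, and (a_{j_1}, b_{j_1}) ≠ ±(a_{j_2}, b_{j_2}) for all j_1 ≠ j_2. Let c_0, c_1, …, c_m ∈ ℝ. If c_1·f_1(x) + c_2·f_2(x) + … + c_m·f_m(x) + c_0 = 0 for all x ∈ ℝ, then c_0 = c_1 = c_2 = … = c_m = 0. -/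
open Finset Complex Filter

noncomputable def Dfun (a b : ℝ) (z : ℂ) : ℂ := 1 + Complex.exp (-(a * z) - b)

lemma Dfun_eq_zero_iff (a b : ℝ) (z : ℂ) :
    Dfun a b z = 0 ↔ ∃ n : ℤ, -(a * z) - b = (2 * n + 1) * Real.pi * I := by
  unfold Dfun
  rw [show (1 + Complex.exp (-(a * z) - b) = 0) ↔
      Complex.exp (-((a:ℂ) * z) - b) = Complex.exp (Real.pi * I) from by
    rw [Complex.exp_pi_mul_I]; constructor <;> intro h <;> linear_combination h,
    Complex.exp_eq_exp_iff_exists_int]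
  constructor
  · rintro ⟨n, hn⟩; exact ⟨n, by rw [hn]; ring⟩
  · rintro ⟨n, hn⟩; exact ⟨n, by rw [hn]; ring⟩

lemma Dfun_zero_countable (a b : ℝ) (ha : a ≠ 0) :
    {z : ℂ | Dfun a b z = 0}.Countable := by
  apply Set.Countable.mono _ (Set.countable_range
    (fun n : ℤ => ((-(b:ℂ) - (2*n+1) * Real.pi * I) / a : ℂ)))
  rintro z hz
  rw [Set.mem_setOf_eq, Dfun_eq_zero_iff] at hz
  obtain ⟨n, hn⟩ := hz
  refine ⟨n, ?_⟩
  have ha' : (a : ℂ) ≠ 0 := Complex.ofReal_ne_zero.mpr ha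
  field_simp
  linear_combination hn

lemma Dfun_real (a b x : ℝ) : Dfun a b x = ((1 + Real.exp (-(a*x) - b) : ℝ) : ℂ) := by
  unfold Dfun; push_cast; ring_nf

lemma Dfun_real_ne_zero (a b x : ℝ) : Dfun a b (x : ℂ) ≠ 0 := by
  rw [Dfun_real]
  exact_mod_cast ne_of_gt (by positivity)

lemma Dfun_cont (a b : ℝ) : Continuous (Dfun a b) := by unfold Dfun; fun_prop

lemma Dfun_diff (a b : ℝ) : Differentiable ℂ (Dfun a b) := by unfold Dfun; fun_prop

/-- The core analytic step: the coefficient of the sigmoid with maximal `|a|` vanishes. -/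
lemma sigmoid_max_coeff_zero (m : ℕ) (a b : Fin m → ℝ)
    (ha : ∀ j, a j ≠ 0)
    (hab : ∀ j1 j2 : Fin m, j1 ≠ j2 →
      ¬ ((a j1 = a j2 ∧ b j1 = b j2) ∨ (a j1 = -a j2 ∧ b j1 = -b j2)))
    (c : Fin m → ℝ) (c0 : ℝ) (s : Finset (Fin m))
    (hzero : ∀ x : ℝ, (∑ j ∈ s, c j * (1 / (1 + Real.exp (-(a j * x) - b j)))) + c0 = 0)
    (jM : Fin m) (hjM : jM ∈ s) (hmax : ∀ j ∈ s, |a j| ≤ |a jM|) :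
    c jM = 0 := by
  by_contra hc
  have hc' : (c jM : ℂ) ≠ 0 := Complex.ofReal_ne_zero.mpr hc
  set F : ℂ → ℂ := fun z => (∑ j ∈ s, (c j : ℂ) * (Dfun (a j) (b j) z)⁻¹) + c0 with hF
  set U : Set ℂ := {z : ℂ | ∀ j ∈ s, Dfun (a j) (b j) z ≠ 0} with hU
  -- U is open
  have hUopen : IsOpen U := by
    have : U = ⋂ j ∈ s, ((Dfun (a j) (b j)) ⁻¹' {0})ᶜ := by
      ext z; simp [hU, Set.mem_iInter]
    rw [this]
    exact isOpen_biInter_finset fun j _ =>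
      (isClosed_singleton.preimage (Dfun_cont (a j) (b j))).isOpen_compl
  -- U is connected (complement of a countable set)
  have hUconn : IsPreconnected U := by
    have hcompl : U = (⋃ j ∈ s, {z : ℂ | Dfun (a j) (b j) z = 0})ᶜ := by
      ext z; simp [hU]
    rw [hcompl]
    exact ((Set.Countable.biUnion s.countable_toSet
      (fun j _ => Dfun_zero_countable (a j) (b j) (ha j))).isConnected_compl_of_one_lt_rank
      (by rw [Complex.rank_real_complex]; norm_num)).isPreconnected
  -- reals are in U
  have hrealU : ∀ x : ℝ, (x : ℂ) ∈ U := fun x j _ => Dfun_real_ne_zero (a j) (b j) x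
  -- F is zero on reals
  have hFreal : ∀ x : ℝ, F (x : ℂ) = 0 := by
    intro x
    have h0 := hzero x
    have : F (x : ℂ) =
        ((∑ j ∈ s, c j * (1 / (1 + Real.exp (-(a j * x) - b j)))) + c0 : ℝ) := by
      rw [hF]
      push_cast
      refine congrArg (· + (c0:ℂ)) (Finset.sum_congr rfl fun j _ => ?_)
      rw [Dfun_real]
      push_cast
      ring
    rw [this, h0, Complex.ofReal_zero]
  -- F is analytic on U
  have hFanal : AnalyticOnNhd ℂ F U := by
    apply DifferentiableOn.analyticOnNhd _ hUopen
    apply DifferentiableOn.add _ (differentiableOn_const _)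
    apply DifferentiableOn.fun_sum
    intro j hjs
    exact DifferentiableOn.const_mul
      (DifferentiableOn.inv ((Dfun_diff (a j) (b j)).differentiableOn)
        (fun z hz => by exact hz j hjs)) _
  -- F vanishes frequently near 0
  have hfreq : ∃ᶠ z in nhdsWithin (0:ℂ) {(0:ℂ)}ᶜ, F z = 0 := by
    have hseq : Tendsto (fun n : ℕ => ((1 / (n + 1 : ℝ) : ℝ) : ℂ)) atTop
        (nhdsWithin (0:ℂ) {(0:ℂ)}ᶜ) := by
      rw [tendsto_nhdsWithin_iff]
      constructor
      · have := tendsto_one_div_add_atTop_nhds_zero_nat (𝕜 := ℝ)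
        have h2 : Tendsto (fun x : ℝ => (x : ℂ)) (nhds 0) (nhds ((0:ℝ):ℂ)) :=
          Complex.continuous_ofReal.tendsto 0
        have h3 := h2.comp this
        rw [Complex.ofReal_zero] at h3
        exact h3
      · filter_upwards with n
        simp only [Set.mem_compl_iff, Set.mem_singleton_iff]
        intro hcon
        have : (1 / (n + 1 : ℝ)) = 0 := by exact_mod_cast hcon
        have : (0:ℝ) < 1 / (n + 1 : ℝ) := by positivity
        simp_all
    exact hseq.frequently (Frequently.of_forall fun n => hFreal _)
  -- F vanishes on U
  have hFzero : Set.EqOn F 0 U :=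
    hFanal.eqOn_zero_of_preconnected_of_frequently_eq_zero hUconn (hrealU 0) hfreq
  -- the pole point
  set p : ℂ := (-(b jM : ℂ) - Real.pi * I) / (a jM) with hp
  have haj' : (a jM : ℂ) ≠ 0 := Complex.ofReal_ne_zero.mpr (ha jM)
  have hDp : Dfun (a jM) (b jM) p = 0 := by
    rw [Dfun_eq_zero_iff]
    exact ⟨0, by rw [hp]; field_simp; push_cast; ring⟩
  -- other denominators do not vanish at p
  have hDother : ∀ j ∈ s, j ≠ jM → Dfun (a j) (b j) p ≠ 0 := by
    intro j hjs hne hzero'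
    rw [Dfun_eq_zero_iff] at hzero'
    obtain ⟨n, hn⟩ := hzero'
    rw [hp] at hn
    have hn2 : -((a j : ℂ) * (-(b jM : ℂ) - Real.pi * I)) - (b j) * (a jM) =
        (2 * n + 1) * Real.pi * I * (a jM) := by
      field_simp at hn
      linear_combination hn
    have hre : (a j) * (b jM) - (b j) * (a jM) = 0 := by
      have := congrArg Complex.re hn2
      simpa using this
    have him : (a j) * Real.pi = (2 * (n:ℝ) + 1) * Real.pi * (a jM) := by
      have := congrArg Complex.im hn2
      push_cast at this
      simpa using this
    have hpi := Real.pi_ne_zero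
    have haj : a j = (2 * (n:ℝ) + 1) * a jM :=
      mul_right_cancel₀ hpi (by linear_combination him)
    -- |2n+1| ≤ 1
    have habs : |(2 * (n:ℝ) + 1)| * |a jM| ≤ |a jM| := by
      calc |(2 * (n:ℝ) + 1)| * |a jM| = |a j| := by rw [haj, abs_mul]
      _ ≤ |a jM| := hmax j hjs
    have hajMpos : 0 < |a jM| := abs_pos.mpr (ha jM)
    have h1 : |(2 * (n:ℝ) + 1)| ≤ 1 := by
      by_contra hgt
      push_neg at hgt
      nlinarith
    have h2 : |2 * n + 1| ≤ 1 := by exact_mod_cast (by push_cast; exact h1 : |((2 * n + 1 : ℤ) : ℝ)| ≤ 1)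
    have h3 : 2 * n + 1 = 1 ∨ 2 * n + 1 = -1 := by
      have h4 := abs_le.mp h2
      omega
    rcases h3 with h3 | h3
    · -- n = 0 : (a j, b j) = (a jM, b jM)
      have hn0 : n = 0 := by omega
      subst hn0
      have ha_eq : a j = a jM := by rw [haj]; push_cast; ring
      have hb_eq : b j = b jM := by
        have h5 : b j * a jM = b jM * a jM := by linear_combination -hre + b jM * ha_eq
        exact mul_right_cancel₀ (ha jM) h5
      exact hab j jM hne (Or.inl ⟨ha_eq, hb_eq⟩)
    · -- n = -1 : (a j, b j) = -(a jM, b jM)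
      have hn1 : n = -1 := by omega
      subst hn1
      have ha_eq : a j = -a jM := by rw [haj]; push_cast; ring
      have hb_eq : b j = -b jM := by
        have h5 : b j * a jM = (-b jM) * a jM := by linear_combination -hre + b jM * ha_eq
        exact mul_right_cancel₀ (ha jM) h5
      exact hab j jM hne (Or.inr ⟨ha_eq, hb_eq⟩)
  -- neighborhood avoiding the other zero sets
  set V : Set ℂ := {z : ℂ | ∀ j ∈ s.erase jM, Dfun (a j) (b j) z ≠ 0} with hV
  have hVopen : IsOpen V := by
    have : V = ⋂ j ∈ s.erase jM, ((Dfun (a j) (b j)) ⁻¹' {0})ᶜ := by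
      ext z; simp [hV, Set.mem_iInter]
    rw [this]
    exact isOpen_biInter_finset fun j _ =>
      (isClosed_singleton.preimage (Dfun_cont (a j) (b j))).isOpen_compl
  have hpV : p ∈ V := by
    intro j hj
    exact hDother j (Finset.mem_of_mem_erase hj) (Finset.ne_of_mem_erase hj)
  obtain ⟨ε, hε, hball⟩ := Metric.isOpen_iff.mp hVopen p hpV
  -- the approaching sequence
  set t : ℕ → ℝ := fun n => (ε/2) / (n+1) with ht
  have htpos : ∀ n, 0 < t n := fun n => by rw [ht]; positivity
  have htlt : ∀ n, t n < ε := by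
    intro n
    rw [ht]
    have h1 : (ε/2) / (n+1 : ℝ) ≤ ε/2 := by
      apply div_le_self (by positivity)
      have : (0:ℝ) ≤ (n:ℝ) := Nat.cast_nonneg n
      linarith
    linarith
  set u : ℕ → ℂ := fun n => p + (t n : ℂ) with hu
  have huU : ∀ n, u n ∈ U := by
    intro n j hjs
    by_cases hje : j = jM
    · subst hje
      intro hzero'
      rw [Dfun_eq_zero_iff] at hzero'
      obtain ⟨k, hk⟩ := hzero'
      -- p also satisfies the eq with n = 0
      have hk0 : -((a j : ℂ) * p) - (b j) = (2 * (0:ℤ) + 1) * Real.pi * I := by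
        rw [hp]; field_simp; push_cast; ring
      rw [hu] at hk
      have hdiff : -((a j : ℂ) * (t n : ℝ)) = (2 * (k:ℂ) - 2 * (0:ℂ)) * Real.pi * I := by
        push_cast at hk hk0 ⊢
        linear_combination hk - hk0
      have := congrArg Complex.re hdiff
      simp at this
      rcases this with h | h
      · exact ha j h
      · exact absurd h (ne_of_gt (htpos n))
    · apply Finset.mem_coe.mp at hjs
      have : u n ∈ Metric.ball p ε := by
        rw [hu, Metric.mem_ball]
        simp only [dist_eq_norm, add_sub_cancel_left]
        rw [Complex.norm_real, Real.norm_eq_abs, abs_of_pos (htpos n)]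
        exact htlt n
      exact hball this j (Finset.mem_erase.mpr ⟨hje, hjs⟩)
  have hulim : Tendsto u atTop (nhds p) := by
    rw [hu]
    have htlim : Tendsto (fun n : ℕ => ((t n : ℝ) : ℂ)) atTop (nhds 0) := by
      have : Tendsto t atTop (nhds 0) := by
        rw [ht]
        have := tendsto_one_div_add_atTop_nhds_zero_nat (𝕜 := ℝ)
        have h2 : Tendsto (fun n : ℕ => (ε/2) * (1 / (n + 1 : ℝ))) atTop (nhds ((ε/2) * 0)) :=
          this.const_mul (ε/2)
        simpa [div_eq_mul_inv, mul_comm] using h2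
      have h2 : Tendsto (fun x : ℝ => (x : ℂ)) (nhds 0) (nhds ((0:ℝ):ℂ)) :=
        Complex.continuous_ofReal.tendsto 0
      simpa [Function.comp_def] using h2.comp this
    simpa using tendsto_const_nhds.add htlim
  -- split the sum
  set R : ℕ → ℂ := fun n =>
    (∑ j ∈ s.erase jM, (c j : ℂ) * (Dfun (a j) (b j) (u n))⁻¹) + c0 with hR
  have hsplit : ∀ n, (c jM : ℂ) * (Dfun (a jM) (b jM) (u n))⁻¹ + R n = 0 := by
    intro n
    have h0 : (∑ j ∈ s, (c j : ℂ) * (Dfun (a j) (b j) (u n))⁻¹) + (c0 : ℂ) = 0 :=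
      hFzero (huU n)
    calc (c jM : ℂ) * (Dfun (a jM) (b jM) (u n))⁻¹ + R n
        = (∑ j ∈ s, (c j : ℂ) * (Dfun (a j) (b j) (u n))⁻¹) + (c0 : ℂ) := by
          simp only [hR]
          rw [← Finset.add_sum_erase s (fun j => (c j : ℂ) * (Dfun (a j) (b j) (u n))⁻¹) hjM]
          ring
      _ = 0 := h0
  -- R converges
  set L : ℂ := (∑ j ∈ s.erase jM, (c j : ℂ) * (Dfun (a j) (b j) p)⁻¹) + c0 with hL
  have hRlim : Tendsto R atTop (nhds L) := by
    rw [hR, hL]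
    apply Tendsto.add _ tendsto_const_nhds
    apply tendsto_finset_sum
    intro j hj
    apply Tendsto.const_mul
    exact ((((Dfun_cont (a j) (b j)).tendsto p).comp hulim).inv₀
      (hDother j (Finset.mem_of_mem_erase hj) (Finset.ne_of_mem_erase hj)))
  -- the inverse converges
  have hglim : Tendsto (fun n => (Dfun (a jM) (b jM) (u n))⁻¹) atTop (nhds (-L / (c jM))) := by
    have : (fun n => (Dfun (a jM) (b jM) (u n))⁻¹) = fun n => -R n / (c jM : ℂ) := by
      funext n
      have := hsplit n
      field_simp
      linear_combination this
    rw [this]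
    exact (hRlim.neg).div_const _
  -- contradiction : D * D⁻¹ = 1 but limits give 0
  have hDlim : Tendsto (fun n => Dfun (a jM) (b jM) (u n)) atTop (nhds 0) := by
    have := ((Dfun_cont (a jM) (b jM)).tendsto p).comp hulim
    rwa [hDp] at this
  have hprod : Tendsto (fun n => Dfun (a jM) (b jM) (u n) * (Dfun (a jM) (b jM) (u n))⁻¹)
      atTop (nhds (0 * (-L / (c jM)))) := hDlim.mul hglim
  have hone : (fun n => Dfun (a jM) (b jM) (u n) * (Dfun (a jM) (b jM) (u n))⁻¹)
      = fun _ => (1:ℂ) := by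
    funext n
    exact mul_inv_cancel₀ (huU n jM hjM)
  rw [hone] at hprod
  have : (1:ℂ) = 0 * (-L / (c jM)) := tendsto_nhds_unique tendsto_const_nhds hprod
  simp at this

lemma sigmoid_finset_zero (m : ℕ) (a b : Fin m → ℝ)
    (ha : ∀ j, a j ≠ 0)
    (hab : ∀ j1 j2 : Fin m, j1 ≠ j2 →
      ¬ ((a j1 = a j2 ∧ b j1 = b j2) ∨ (a j1 = -a j2 ∧ b j1 = -b j2)))
    (c : Fin m → ℝ) (c0 : ℝ) :
    ∀ s : Finset (Fin m),
      (∀ x : ℝ, (∑ j ∈ s, c j * (1 / (1 + Real.exp (-(a j * x) - b j)))) + c0 = 0) →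
      ∀ j ∈ s, c j = 0 := by
  intro s
  induction s using Finset.strongInduction with
  | _ s ih =>
    intro hzero j hj
    obtain ⟨jM, hjM, hmax⟩ := s.exists_max_image (fun i => |a i|) ⟨j, hj⟩
    have hcM : c jM = 0 := sigmoid_max_coeff_zero m a b ha hab c c0 s hzero jM hjM hmax
    have hzero' : ∀ x : ℝ,
        (∑ j ∈ s.erase jM, c j * (1 / (1 + Real.exp (-(a j * x) - b j)))) + c0 = 0 := by
      intro x
      have h0 := hzero x
      rw [← Finset.add_sum_erase s _ hjM, hcM] at h0
      simpa using h0
    by_cases hje : j = jM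
    · rw [hje]; exact hcM
    · exact ih (s.erase jM) (Finset.erase_ssubset hjM) hzero' j (Finset.mem_erase.mpr ⟨hje, hj⟩)

/-- Linear independence of one-dimensional logistic sigmoid ridge functions together
with constants. -/
theorem stmt11 (m : ℕ) (a b : Fin m → ℝ)
    (ha : ∀ j, a j ≠ 0)
    (hab : ∀ j1 j2 : Fin m, j1 ≠ j2 →
      ¬ ((a j1 = a j2 ∧ b j1 = b j2) ∨ (a j1 = -a j2 ∧ b j1 = -b j2)))
    (c : Fin m → ℝ) (c0 : ℝ)
    (h : ∀ x : ℝ, (∑ j, c j * (1 / (1 + Real.exp (-(a j * x) - b j)))) + c0 = 0) :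
    c0 = 0 ∧ ∀ j, c j = 0 := by
  have hall : ∀ j, c j = 0 := fun j =>
    sigmoid_finset_zero m a b ha hab c c0 Finset.univ (by simpa using h) j (Finset.mem_univ j)
  refine ⟨?_, hall⟩
  have h0 := h 0
  simp [hall] at h0
  exact h0
end

section
/- Let σ(x) = Sigmoid(x) = 1/(1+exp(−x)) or σ(x) = tanh(x), and let f : ℝ → ℝ be defined by f(x) = Σ_{k=1}^n s_k·σ(a_k·x + b_k) + s_0 with a_k, b_k, s_k ∈ ℝ. Assume a_k ≠ 0 for all k and (a_{k_1}, b_{k_1}) ≠ ±(a_{k_2}, b_{k_2}) for all 1 ≤ k_1 < k_2 ≤ n. If f has 2^n distinct real zeros, then s_0 = s_1 = … = s_n = 0. -/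
open Finset

/-- The logistic sigmoid function. -/
noncomputable def sigmoid (x : ℝ) : ℝ := 1 / (1 + Real.exp (-x))


private lemma hasDerivAt_expPoly (Λ : Finset ℝ) (p : ℝ → ℝ) (x : ℝ) :
    HasDerivAt (fun y => ∑ l ∈ Λ, p l * Real.exp (l * y))
      (∑ l ∈ Λ, p l * (l * Real.exp (l * x))) x := by
  apply HasDerivAt.fun_sum
  intro l _
  have h1 : HasDerivAt (fun y : ℝ => l * y) l x := by
    simpa using (hasDerivAt_id x).const_mul l
  have h2 := h1.exp
  have h3 := h2.const_mul (p l)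
  convert h3 using 1
  · rfl
  · ring

private lemma exp_poly_zero_bound : ∀ (N : ℕ) (Λ : Finset ℝ), Λ.card = N →
    ∀ (p : ℝ → ℝ) (m : ℕ), N ≤ m →
    ∀ (z : Fin m → ℝ), StrictMono z →
    (∀ i, ∑ l ∈ Λ, p l * Real.exp (l * z i) = 0) →
    ∀ l ∈ Λ, p l = 0 := by
  intro N
  induction N with
  | zero =>
    intro Λ hcard p m _ z _ _ l hl
    rw [Finset.card_eq_zero] at hcard
    simp [hcard] at hl
  | succ N ih =>
    intro Λ hcard p m hm z hz hzero
    have hne : Λ.Nonempty := Finset.card_pos.mp (by omega)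
    obtain ⟨l0, hl0⟩ := hne
    -- shifted function F y = ∑ p l exp((l - l0) y)
    set F : ℝ → ℝ := fun y => ∑ l ∈ Λ, p l * Real.exp ((l - l0) * y) with hF
    have hFz : ∀ i, F (z i) = 0 := by
      intro i
      have : F (z i) = Real.exp (-l0 * z i) * ∑ l ∈ Λ, p l * Real.exp (l * z i) := by
        rw [Finset.mul_sum]
        apply Finset.sum_congr rfl
        intro l _
        rw [show (l - l0) * z i = -l0 * z i + l * z i by ring, Real.exp_add]
        ring
      rw [this, hzero i, mul_zero]
    obtain ⟨m', rfl⟩ : ∃ m', m = m' + 1 := ⟨m - 1, by omega⟩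
    -- Rolle between consecutive zeros
    have hroll : ∀ i : Fin m', ∃ c ∈ Set.Ioo (z i.castSucc) (z i.succ),
        ∑ l ∈ Λ, p l * ((l - l0) * Real.exp ((l - l0) * c)) = 0 := by
      intro i
      have hab : z i.castSucc < z i.succ := hz Fin.castSucc_lt_succ
      have hd : ∀ x : ℝ, HasDerivAt F (∑ l ∈ Λ, p l * ((l - l0) * Real.exp ((l - l0) * x))) x := by
        intro x
        have := hasDerivAt_expPoly Λ (fun l => p l) x
        -- need version with l - l0 frequencies; redo directly
        apply HasDerivAt.fun_sum
        intro l _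
        have h1 : HasDerivAt (fun y : ℝ => (l - l0) * y) (l - l0) x := by
          simpa using (hasDerivAt_id x).const_mul (l - l0)
        have h3 := h1.exp.const_mul (p l)
        convert h3 using 1
        · rfl
        · ring
      apply exists_hasDerivAt_eq_zero hab
      · exact fun x _ => (hd x).continuousAt.continuousWithinAt
      · rw [hFz, hFz]
      · intro x _; exact hd x
    choose w hw1 hw2 using hroll
    have hwmono : StrictMono w := by
      intro i j hij
      have h1 : w i < z i.succ := (hw1 i).2
      have h2 : z j.castSucc < w j := (hw1 j).1
      have h3 : z i.succ ≤ z j.castSucc := by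
        apply hz.monotone
        rw [Fin.succ_le_castSucc_iff]
        exact hij
      linarith
    -- apply IH to image of erase under (· - l0)
    have key := ih ((Λ.erase l0).image (· - l0))
      (by
        rw [Finset.card_image_of_injective _ (sub_left_injective), Finset.card_erase_of_mem hl0,
          hcard]
        omega)
      (fun μ => p (μ + l0) * μ) m' (by omega) w hwmono
      (by
        intro i
        rw [Finset.sum_image (by intro x _ y _ h; exact sub_left_injective h)]
        have := hw2 i
        rw [← Finset.add_sum_erase _ _ hl0] at this
        simp only [sub_self, zero_mul, mul_zero, Real.exp_zero, zero_add] at this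
        rw [← this]
        apply Finset.sum_congr rfl
        intro l _
        show p (l - l0 + l0) * (l - l0) * Real.exp ((l - l0) * w i)
          = p l * ((l - l0) * Real.exp ((l - l0) * w i))
        rw [show l - l0 + l0 = l by ring]
        ring)
    have hne0 : ∀ l ∈ Λ, l ≠ l0 → p l = 0 := by
      intro l hl hne
      have hmem : l - l0 ∈ (Λ.erase l0).image (· - l0) :=
        Finset.mem_image_of_mem _ (Finset.mem_erase.mpr ⟨hne, hl⟩)
      have := key _ hmem
      rw [show l - l0 + l0 = l by ring] at this
      have hsub : l - l0 ≠ 0 := sub_ne_zero.mpr hne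
      exact (mul_eq_zero.mp this).resolve_right hsub
    intro l hl
    by_cases hll : l = l0
    · subst hll
      have h0 := hzero 0
      rw [Finset.sum_eq_single_of_mem l hl (fun b hb hbne => by rw [hne0 b hb hbne, zero_mul])] at h0
      exact (mul_eq_zero.mp h0).resolve_right (Real.exp_ne_zero _)
    · exact hne0 l hl hll

private lemma expand_lemma {R : Type*} [CommRing R] (n : ℕ) (E c : Fin n → R) (c0 : R) :
    (c0 + ∑ k, c k) * ∏ j, (E j + 1)
      - 2 * ∑ k, c k * ∏ j ∈ univ.erase k, (E j + 1)
    = ∑ S ∈ (univ : Finset (Fin n)).powerset,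
        (c0 + ∑ k ∈ S, c k - ∑ k ∈ univ \ S, c k) * ∏ j ∈ S, E j := by
  have hprod : ∀ T : Finset (Fin n), ∏ j ∈ T, (E j + 1) = ∑ S ∈ T.powerset, ∏ j ∈ S, E j := by
    intro T
    rw [Finset.prod_add E (fun _ => 1) T]
    exact Finset.sum_congr rfl fun S _ => by simp
  have hsdiff : ∀ S : Finset (Fin n), (univ : Finset (Fin n)) \ S
      = univ.filter (fun k => k ∉ S) := by
    intro S; ext k; simp
  have h2 : ∑ k, c k * ∏ j ∈ univ.erase k, (E j + 1)
      = ∑ S ∈ (univ : Finset (Fin n)).powerset, (∑ k ∈ univ \ S, c k) * ∏ j ∈ S, E j := by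
    have herase : ∀ k : Fin n, ((univ : Finset (Fin n)).erase k).powerset
        = (univ : Finset (Fin n)).powerset.filter (fun S => k ∉ S) := by
      intro k; ext S
      simp [Finset.subset_erase]
    calc ∑ k, c k * ∏ j ∈ univ.erase k, (E j + 1)
        = ∑ k, ∑ S ∈ (univ : Finset (Fin n)).powerset,
            (if k ∉ S then c k * ∏ j ∈ S, E j else 0) := by
          apply Finset.sum_congr rfl; intro k _
          rw [hprod, herase k, Finset.mul_sum, Finset.sum_filter]
      _ = ∑ S ∈ (univ : Finset (Fin n)).powerset, ∑ k,
            (if k ∉ S then c k * ∏ j ∈ S, E j else 0) := Finset.sum_comm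
      _ = ∑ S ∈ (univ : Finset (Fin n)).powerset, (∑ k ∈ univ \ S, c k) * ∏ j ∈ S, E j := by
          apply Finset.sum_congr rfl; intro S _
          rw [hsdiff S, Finset.sum_filter, Finset.sum_mul]
          apply Finset.sum_congr rfl; intro k _
          split <;> simp
  rw [hprod, h2, Finset.mul_sum, Finset.mul_sum, ← Finset.sum_sub_distrib]
  apply Finset.sum_congr rfl; intro S hS
  have hsub : S ⊆ univ := Finset.mem_powerset.mp hS
  have hsum : ∑ k ∈ univ \ S, c k + ∑ k ∈ S, c k = ∑ k, c k := Finset.sum_sdiff hsub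
  have : (∑ k, c k) = ∑ k ∈ univ \ S, c k + ∑ k ∈ S, c k := hsum.symm
  rw [this]
  ring

private lemma tanh_mul (y : ℝ) :
    Real.tanh y * (Real.exp (2*y) + 1) = Real.exp (2*y) - 1 := by
  rw [Real.tanh_eq_sinh_div_cosh, Real.sinh_eq, Real.cosh_eq, Real.exp_neg]
  have h1 : Real.exp y ≠ 0 := Real.exp_ne_zero y
  have h2 : (0:ℝ) < Real.exp y + (Real.exp y)⁻¹ := by positivity
  rw [show (2:ℝ)*y = y + y by ring, Real.exp_add]
  field_simp

private lemma prodForm (n : ℕ) (α β c : Fin n → ℝ) (c0 : ℝ) (x : ℝ) :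
    (∑ k, c k * Real.tanh (α k * x + β k) + c0)
        * ∏ k, (Real.exp (2*(α k * x + β k)) + 1)
    = ∑ S ∈ (univ : Finset (Fin n)).powerset,
        (Real.exp (∑ k ∈ S, 2 * β k) * (c0 + ∑ k ∈ S, c k - ∑ k ∈ univ \ S, c k))
          * Real.exp ((∑ k ∈ S, 2 * α k) * x) := by
  set E : Fin n → ℝ := fun k => Real.exp (2*(α k * x + β k)) with hE
  have step1 : (∑ k, c k * Real.tanh (α k * x + β k) + c0) * ∏ k, (E k + 1)
      = (c0 + ∑ k, c k) * ∏ j, (E j + 1)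
        - 2 * ∑ k, c k * ∏ j ∈ univ.erase k, (E j + 1) := by
    rw [add_mul, Finset.sum_mul]
    have hterm : ∀ k : Fin n, (c k * Real.tanh (α k * x + β k)) * ∏ j, (E j + 1)
        = c k * ∏ j, (E j + 1) - 2 * (c k * ∏ j ∈ univ.erase k, (E j + 1)) := by
      intro k
      have hk : ∏ j, (E j + 1) = (E k + 1) * ∏ j ∈ univ.erase k, (E j + 1) :=
        (Finset.mul_prod_erase univ _ (Finset.mem_univ k)).symm
      have h2 : Real.tanh (α k * x + β k) * (E k + 1) = E k - 1 := tanh_mul _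
      calc c k * Real.tanh (α k * x + β k) * ∏ j, (E j + 1)
          = c k * (Real.tanh (α k * x + β k) * (E k + 1))
              * ∏ j ∈ univ.erase k, (E j + 1) := by rw [hk]; ring
        _ = c k * (E k - 1) * ∏ j ∈ univ.erase k, (E j + 1) := by rw [h2]
        _ = c k * ((E k + 1) * ∏ j ∈ univ.erase k, (E j + 1))
              - 2 * (c k * ∏ j ∈ univ.erase k, (E j + 1)) := by ring
        _ = _ := by rw [← hk]
    rw [Finset.sum_congr rfl (fun k _ => hterm k), Finset.sum_sub_distrib,
      ← Finset.sum_mul, Finset.mul_sum]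
    ring
  rw [step1, expand_lemma n E c c0]
  apply Finset.sum_congr rfl; intro S _
  have hsum2 : (∑ k ∈ S, 2*β k) + (∑ k ∈ S, 2*α k) * x = ∑ k ∈ S, 2*(α k * x + β k) := by
    rw [Finset.sum_mul, ← Finset.sum_add_distrib]
    apply Finset.sum_congr rfl
    intro k _
    ring
  have hprodexp : ∏ j ∈ S, E j
      = Real.exp (∑ k ∈ S, 2*β k) * Real.exp ((∑ k ∈ S, 2*α k) * x) := by
    rw [← Real.exp_add, hsum2, Real.exp_sum]
  rw [hprodexp]
  ring

private lemma fibers_zero (n : ℕ) (α β c : Fin n → ℝ) (c0 : ℝ) (m : ℕ)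
    (hm : ((univ : Finset (Fin n)).powerset.image (fun S => ∑ k ∈ S, 2*α k)).card ≤ m)
    (z : Fin m → ℝ) (hz : StrictMono z)
    (hzero : ∀ i, ∑ k, c k * Real.tanh (α k * z i + β k) + c0 = 0) :
    ∀ l ∈ (univ : Finset (Fin n)).powerset.image (fun S => ∑ k ∈ S, 2*α k),
      ∑ S ∈ (univ : Finset (Fin n)).powerset.filter (fun S => (∑ k ∈ S, 2*α k) = l),
        Real.exp (∑ k ∈ S, 2 * β k) * (c0 + ∑ k ∈ S, c k - ∑ k ∈ univ \ S, c k) = 0 := by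
  set Q : Finset (Fin n) → ℝ :=
    fun S => Real.exp (∑ k ∈ S, 2 * β k) * (c0 + ∑ k ∈ S, c k - ∑ k ∈ univ \ S, c k) with hQ
  set L : Finset (Fin n) → ℝ := fun S => ∑ k ∈ S, 2*α k with hL
  set Λ := (univ : Finset (Fin n)).powerset.image L with hΛ
  set p : ℝ → ℝ :=
    fun l => ∑ S ∈ (univ : Finset (Fin n)).powerset.filter (fun S => L S = l), Q S with hp
  have key : ∀ i, ∑ l ∈ Λ, p l * Real.exp (l * z i) = 0 := by
    intro i
    have h1 : ∀ l ∈ Λ, p l * Real.exp (l * z i)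
        = ∑ S ∈ (univ : Finset (Fin n)).powerset.filter (fun S => L S = l),
            Q S * Real.exp (L S * z i) := by
      intro l _
      rw [hp, Finset.sum_mul]
      apply Finset.sum_congr rfl
      intro S hS
      rw [(Finset.mem_filter.mp hS).2]
    rw [Finset.sum_congr rfl h1,
      Finset.sum_fiberwise_of_maps_to (fun S hS => Finset.mem_image_of_mem L hS)]
    have hpf := prodForm n α β c c0 (z i)
    rw [hzero i, zero_mul] at hpf
    exact hpf.symm
  exact fun l hl => exp_poly_zero_bound Λ.card Λ rfl p m hm z hz key l hl

private lemma complex_identity (n : ℕ) (α β c : Fin n → ℝ) (c0 : ℝ) (m : ℕ)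
    (hm : ((univ : Finset (Fin n)).powerset.image (fun S => ∑ k ∈ S, 2*α k)).card ≤ m)
    (z : Fin m → ℝ) (hz : StrictMono z)
    (hzero : ∀ i, ∑ k, c k * Real.tanh (α k * z i + β k) + c0 = 0) (w : ℂ) :
    ((c0:ℂ) + ∑ k, (c k : ℂ))
        * ∏ j, (Complex.exp (2*((α j :ℂ) * w + (β j:ℂ))) + 1)
      - 2 * ∑ k, (c k : ℂ)
          * ∏ j ∈ univ.erase k, (Complex.exp (2*((α j:ℂ) * w + (β j:ℂ))) + 1) = 0 := by
  have hfib := fibers_zero n α β c c0 m hm z hz hzero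
  set V : Fin n → ℂ := fun j => Complex.exp (2*((α j :ℂ) * w + (β j:ℂ))) with hV
  set L : Finset (Fin n) → ℝ := fun S => ∑ k ∈ S, 2*α k with hL
  set Q : Finset (Fin n) → ℝ :=
    fun S => Real.exp (∑ k ∈ S, 2 * β k) * (c0 + ∑ k ∈ S, c k - ∑ k ∈ univ \ S, c k) with hQ
  rw [expand_lemma n V (fun k => (c k : ℂ)) (c0 : ℂ)]
  have hprodV : ∀ S ∈ (univ : Finset (Fin n)).powerset,
      ((c0:ℂ) + ∑ k ∈ S, (c k:ℂ) - ∑ k ∈ univ \ S, (c k:ℂ)) * ∏ j ∈ S, V j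
      = (Q S : ℂ) * Complex.exp ((L S : ℝ) * w) := by
    intro S _
    have h1 : ∏ j ∈ S, V j = Complex.exp (∑ j ∈ S, 2*((α j :ℂ) * w + (β j:ℂ))) := by
      rw [Complex.exp_sum]
    have h2 : (∑ j ∈ S, 2*((α j :ℂ) * w + (β j:ℂ)))
        = ((∑ k ∈ S, 2*β k : ℝ) : ℂ) + ((L S : ℝ) : ℂ) * w := by
      rw [hL]
      push_cast
      rw [Finset.sum_mul, ← Finset.sum_add_distrib]
      apply Finset.sum_congr rfl
      intro k _
      ring
    rw [h1, h2, Complex.exp_add, ← Complex.ofReal_exp, hQ]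
    push_cast
    ring
  rw [Finset.sum_congr rfl hprodV,
    ← Finset.sum_fiberwise_of_maps_to (fun S hS => Finset.mem_image_of_mem L hS)
      (fun S => (Q S : ℂ) * Complex.exp ((L S : ℝ) * w))]
  apply Finset.sum_eq_zero
  intro l hl
  have h3 : ∀ S ∈ (univ : Finset (Fin n)).powerset.filter (fun S => L S = l),
      (Q S : ℂ) * Complex.exp ((L S : ℝ) * w) = (Q S : ℂ) * Complex.exp ((l:ℂ) * w) := by
    intro S hS
    rw [(Finset.mem_filter.mp hS).2]
  rw [Finset.sum_congr rfl h3, ← Finset.sum_mul]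
  have h4 : ∑ S ∈ (univ : Finset (Fin n)).powerset.filter (fun S => L S = l), (Q S : ℂ)
      = ((∑ S ∈ (univ : Finset (Fin n)).powerset.filter (fun S => L S = l), Q S : ℝ) : ℂ) := by
    push_cast
    rfl
  rw [h4, hfib l hl]
  simp

private lemma tanh_indep : ∀ (n : ℕ) (α β c : Fin n → ℝ) (c0 : ℝ),
    (∀ k, 0 < α k) → (Function.Injective (fun k => (α k, β k))) →
    (∀ x : ℝ, ∑ k, c k * Real.tanh (α k * x + β k) + c0 = 0) →
    c0 = 0 ∧ ∀ k, c k = 0 := by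
  intro n
  induction n with
  | zero =>
    intro α β c c0 _ _ hg
    refine ⟨?_, fun k => k.elim0⟩
    simpa using hg 0
  | succ m ih =>
    intro α β c c0 hα hinj hg
    have hCI := fun w => complex_identity (m+1) α β c c0
      ((univ : Finset (Fin (m+1))).powerset.image (fun S => ∑ k ∈ S, 2*α k)).card le_rfl
      (fun i => (i : ℝ)) (fun i j hij => by
        show ((i : ℕ) : ℝ) < ((j : ℕ) : ℝ)
        exact_mod_cast hij)
      (fun i => hg _) w
    obtain ⟨k0, -, hk0⟩ := Finset.exists_max_image (univ : Finset (Fin (m+1))) α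
      ⟨0, mem_univ 0⟩
    have hak0 : α k0 ≠ 0 := ne_of_gt (hα k0)
    set w : ℂ := (↑(-(β k0) / α k0) + ↑(Real.pi/(2 * α k0)) * Complex.I : ℂ) with hw
    set V : Fin (m+1) → ℂ := fun j => Complex.exp (2*((α j :ℂ) * w + (β j:ℂ))) with hV
    have hVexp : ∀ j, 2*((α j :ℂ) * w + (β j:ℂ))
        = ↑(2*(α j * (-(β k0) / α k0) + β j)) + ↑(α j * Real.pi / α k0) * Complex.I := by
      intro j
      rw [hw]
      push_cast
      ring
    have hVk0 : V k0 = -1 := by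
      show Complex.exp _ = -1
      rw [hVexp k0]
      have e1 : 2*(α k0 * (-(β k0) / α k0) + β k0) = 0 := by field_simp <;> ring
      have e2 : α k0 * Real.pi / α k0 = Real.pi := by field_simp <;> ring
      rw [e1, e2]
      simpa using Complex.exp_pi_mul_I
    have hVne : ∀ j, j ≠ k0 → V j + 1 ≠ 0 := by
      intro j hj hcon
      have hVj : V j = -1 := by linear_combination hcon
      have hexp : Complex.exp (↑(2*(α j * (-(β k0) / α k0) + β j))
          + ↑(α j * Real.pi / α k0) * Complex.I) = Complex.exp (↑Real.pi * Complex.I) := by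
        rw [← hVexp j, Complex.exp_pi_mul_I]
        exact hVj
      rw [Complex.exp_eq_exp_iff_exists_int] at hexp
      obtain ⟨N, hN⟩ := hexp
      have hN' : (↑(2*(α j * (-(β k0) / α k0) + β j)) + ↑(α j * Real.pi / α k0) * Complex.I : ℂ)
          = ↑((1+2*(N:ℝ))*Real.pi) * Complex.I := by
        rw [hN]
        push_cast
        ring
      rw [Complex.ext_iff] at hN'
      obtain ⟨hre, him⟩ := hN'
      simp only [Complex.add_re, Complex.add_im, Complex.ofReal_re, Complex.ofReal_im,
        Complex.mul_re, Complex.mul_im, Complex.I_re, Complex.I_im, mul_zero, mul_one,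
        zero_mul, zero_add, add_zero, sub_zero, zero_sub, neg_zero] at hre him
      -- hre : 2*(α j * (-(β k0)/α k0) + β j) = 0
      -- him : α j * π / α k0 = (1+2N)*π
      have hratio : α j = (1+2*(N:ℝ)) * α k0 := by
        have hπ : Real.pi ≠ 0 := ne_of_gt Real.pi_pos
        field_simp at him
        have h' : (α j - (1+2*(N:ℝ)) * α k0) * Real.pi = 0 := by linear_combination Real.pi * him
        have h'' := (mul_eq_zero.mp h').resolve_right hπ
        linarith
      have hNbound : (0:ℝ) < 1+2*(N:ℝ) ∧ (1+2*(N:ℝ)) ≤ 1 := by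
        constructor
        · by_contra hle
          push_neg at hle
          nlinarith [hα j, hα k0]
        · by_contra hle
          push_neg at hle
          have := hk0 j (mem_univ j)
          nlinarith [hα k0]
      have hN0 : N = 0 := by
        have h1 : (0:ℝ) < 1+2*(N:ℝ) := hNbound.1
        have h2 : (1+2*(N:ℝ)) ≤ 1 := hNbound.2
        have h1' : (0:ℤ) < 1+2*N := by exact_mod_cast h1
        have h2' : (1+2*N : ℤ) ≤ 1 := by exact_mod_cast h2
        omega
      rw [hN0] at hratio
      simp at hratio
      -- α j = α k0
      have hβ : β j = β k0 := by
        have h5 : 2*(α j * (-(β k0) / α k0) + β j) = 0 := hre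
        rw [hratio] at h5
        have h6 : α k0 * (-(β k0)/α k0) = -β k0 := by field_simp <;> ring
        rw [h6] at h5
        linarith
      exact hj (hinj (show (α j, β j) = (α k0, β k0) by rw [hratio, hβ]))
    -- evaluate the identity at w
    have hid := hCI w
    have hprod0 : ∏ j, (V j + 1) = 0 :=
      Finset.prod_eq_zero (mem_univ k0) (by rw [hVk0]; ring)
    have hsum : ∑ k, (c k : ℂ) * ∏ j ∈ univ.erase k, (V j + 1)
        = (c k0 : ℂ) * ∏ j ∈ univ.erase k0, (V j + 1) := by
      apply Finset.sum_eq_single_of_mem k0 (mem_univ k0)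
      intro k _ hk
      have hk0mem : k0 ∈ univ.erase k := Finset.mem_erase.mpr ⟨Ne.symm hk, mem_univ k0⟩
      rw [Finset.prod_eq_zero hk0mem (by rw [hVk0]; ring), mul_zero]
    rw [hprod0, mul_zero, hsum, zero_sub, neg_eq_zero] at hid
    have hPne : ∏ j ∈ univ.erase k0, (V j + 1) ≠ 0 := by
      rw [Finset.prod_ne_zero_iff]
      intro j hj
      exact hVne j (Finset.mem_erase.mp hj).1
    have hck0 : c k0 = 0 := by
      have h2 : (c k0 : ℂ) * ∏ j ∈ univ.erase k0, (V j + 1) = 0 := by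
        have h22 : (2:ℂ) ≠ 0 := two_ne_zero
        exact (mul_eq_zero.mp hid).resolve_left h22
      have := (mul_eq_zero.mp h2).resolve_right hPne
      exact_mod_cast this
    -- reduced family
    have hg' : ∀ x : ℝ, ∑ i : Fin m, (c ∘ k0.succAbove) i
        * Real.tanh ((α ∘ k0.succAbove) i * x + (β ∘ k0.succAbove) i) + c0 = 0 := by
      intro x
      have := hg x
      rw [Fin.sum_univ_succAbove
        (fun k => c k * Real.tanh (α k * x + β k)) k0, hck0] at this
      simpa using this
    have hinj' : Function.Injective
        (fun i : Fin m => ((α ∘ k0.succAbove) i, (β ∘ k0.succAbove) i)) := by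
      intro i j hij
      exact Fin.succAbove_right_injective (hinj hij)
    obtain ⟨hc0, hc'⟩ := ih (α ∘ k0.succAbove) (β ∘ k0.succAbove) (c ∘ k0.succAbove) c0
      (fun i => hα _) hinj' hg'
    refine ⟨hc0, fun k => ?_⟩
    by_cases hk : k = k0
    · rw [hk]; exact hck0
    · obtain ⟨i, hi⟩ := Fin.exists_succAbove_eq hk
      rw [← hi]
      exact hc' i

private lemma exists_strictMono_zeros {m M : ℕ} (hM : M ≤ m) (z : Fin m → ℝ)
    (hz : Function.Injective z) :
    ∃ f : Fin M → ℝ, StrictMono f ∧ ∀ i, ∃ j, z j = f i := by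
  have hcard : (Finset.image z univ).card = m := by
    rw [Finset.card_image_of_injective _ hz, Finset.card_univ, Fintype.card_fin]
  set e := (Finset.image z univ).orderIsoOfFin hcard with he
  refine ⟨fun i => (e (Fin.castLE hM i) : ℝ), ?_, ?_⟩
  · intro i j hij
    have h1 : Fin.castLE hM i < Fin.castLE hM j := by
      rw [Fin.lt_def]
      simp only [Fin.coe_castLE]
      exact hij
    exact e.strictMono h1
  · intro i
    have hmem := (e (Fin.castLE hM i)).2
    obtain ⟨j, _, hj⟩ := Finset.mem_image.mp hmem
    exact ⟨j, hj⟩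

private lemma g_eq_zero (n : ℕ) (α β c : Fin n → ℝ) (c0 : ℝ)
    (z : Fin (2^n) → ℝ) (hz : Function.Injective z)
    (hzero : ∀ i, ∑ k, c k * Real.tanh (α k * z i + β k) + c0 = 0) :
    ∀ x : ℝ, ∑ k, c k * Real.tanh (α k * x + β k) + c0 = 0 := by
  set L : Finset (Fin n) → ℝ := fun S => ∑ k ∈ S, 2*α k with hL
  set Λ := (univ : Finset (Fin n)).powerset.image L with hΛ
  have hcard : Λ.card ≤ 2^n := le_trans Finset.card_image_le (by
    rw [Finset.card_powerset, Finset.card_univ, Fintype.card_fin])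
  obtain ⟨f, hmono, hf⟩ := exists_strictMono_zeros hcard z hz
  have hzero' : ∀ i, ∑ k, c k * Real.tanh (α k * f i + β k) + c0 = 0 := by
    intro i
    obtain ⟨j, hj⟩ := hf i
    rw [← hj]
    exact hzero j
  have hfib := fibers_zero n α β c c0 Λ.card le_rfl f hmono hzero'
  intro x
  have hpf := prodForm n α β c c0 x
  have hsum0 : ∑ S ∈ (univ : Finset (Fin n)).powerset,
      (Real.exp (∑ k ∈ S, 2 * β k) * (c0 + ∑ k ∈ S, c k - ∑ k ∈ univ \ S, c k))
        * Real.exp ((∑ k ∈ S, 2 * α k) * x) = 0 := by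
    rw [← Finset.sum_fiberwise_of_maps_to (fun S hS => Finset.mem_image_of_mem L hS)
      (fun S => (Real.exp (∑ k ∈ S, 2 * β k) * (c0 + ∑ k ∈ S, c k - ∑ k ∈ univ \ S, c k))
        * Real.exp ((∑ k ∈ S, 2 * α k) * x))]
    apply Finset.sum_eq_zero
    intro l hl
    have h3 : ∀ S ∈ (univ : Finset (Fin n)).powerset.filter (fun S => L S = l),
        (Real.exp (∑ k ∈ S, 2 * β k) * (c0 + ∑ k ∈ S, c k - ∑ k ∈ univ \ S, c k))
          * Real.exp ((∑ k ∈ S, 2 * α k) * x)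
        = (Real.exp (∑ k ∈ S, 2 * β k) * (c0 + ∑ k ∈ S, c k - ∑ k ∈ univ \ S, c k))
          * Real.exp (l * x) := by
      intro S hS
      have := (Finset.mem_filter.mp hS).2
      rw [hL] at this
      rw [show (∑ k ∈ S, 2 * α k) = l from this]
    rw [Finset.sum_congr rfl h3, ← Finset.sum_mul, hfib l hl, zero_mul]
  rw [hsum0] at hpf
  have hpos : (0:ℝ) < ∏ k, (Real.exp (2*(α k * x + β k)) + 1) :=
    Finset.prod_pos (fun k _ => by positivity)
  exact (mul_eq_zero.mp hpf).resolve_right (ne_of_gt hpos)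

private lemma sigmoid_eq (y : ℝ) : sigmoid y = 1/2 + (1/2) * Real.tanh ((1/2) * y) := by
  have h := tanh_mul ((1/2)*y)
  rw [show 2*((1/2)*y) = y by ring] at h
  have hd : (0:ℝ) < Real.exp y + 1 := by positivity
  have ht : Real.tanh ((1/2)*y) = (Real.exp y - 1)/(Real.exp y + 1) := by
    rw [eq_div_iff (ne_of_gt hd)]
    exact h
  rw [sigmoid, ht, Real.exp_neg]
  have he : Real.exp y ≠ 0 := Real.exp_ne_zero y
  field_simp
  ring

/-- If a one-dimensional shallow analytic network with `n` neurons (with `σ = Sigmoid`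
or `σ = tanh`, nonzero slopes and pairwise non-equal parameters up to sign) has `2^n`
distinct real zeros, then all its coefficients vanish. -/
theorem stmt12 (σ : ℝ → ℝ) (hσ : σ = sigmoid ∨ σ = Real.tanh) (n : ℕ)
    (a b s : Fin n → ℝ) (s0 : ℝ)
    (ha : ∀ k, a k ≠ 0)
    (hab : ∀ k1 k2 : Fin n, k1 ≠ k2 →
      ¬ ((a k1 = a k2 ∧ b k1 = b k2) ∨ (a k1 = -a k2 ∧ b k1 = -b k2)))
    (z : Fin (2 ^ n) → ℝ) (hz : Function.Injective z)
    (hzero : ∀ i, (∑ k, s k * σ (a k * z i + b k)) + s0 = 0) :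
    s0 = 0 ∧ ∀ k, s k = 0 := by
  obtain ⟨t, d, q, ht, hq, hσy⟩ : ∃ t d q : ℝ, 0 < t ∧ q ≠ 0 ∧
      ∀ y, σ y = d + q * Real.tanh (t * y) := by
    rcases hσ with h | h
    · exact ⟨1/2, 1/2, 1/2, by norm_num, by norm_num,
        fun y => by rw [h]; rw [sigmoid_eq y]⟩
    · exact ⟨1, 0, 1, by norm_num, by norm_num, fun y => by rw [h]; simp⟩
  set α0 : Fin n → ℝ := fun k => t * a k with hα0
  set β0 : Fin n → ℝ := fun k => t * b k with hβ0
  set c0f : Fin n → ℝ := fun k => q * s k with hc0f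
  set C0 : ℝ := s0 + d * ∑ k, s k with hC0
  set α : Fin n → ℝ := fun k => if 0 < α0 k then α0 k else -α0 k with hα
  set β : Fin n → ℝ := fun k => if 0 < α0 k then β0 k else -β0 k with hβ
  set c : Fin n → ℝ := fun k => if 0 < α0 k then c0f k else -c0f k with hc
  have hα0ne : ∀ k, α0 k ≠ 0 := fun k => mul_ne_zero (ne_of_gt ht) (ha k)
  have hαpos : ∀ k, 0 < α k := by
    intro k
    by_cases hk : 0 < α0 k
    · simpa [hα, hk] using hk
    · have hlt : α0 k < 0 := lt_of_le_of_ne (not_lt.mp hk) (hα0ne k)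
      simp only [hα, if_neg hk]
      linarith
  have hterm : ∀ (k : Fin n) (x : ℝ),
      c k * Real.tanh (α k * x + β k) = c0f k * Real.tanh (α0 k * x + β0 k) := by
    intro k x
    by_cases hk : 0 < α0 k
    · simp [hα, hβ, hc, hk]
    · simp only [hα, hβ, hc, if_neg hk]
      rw [show -α0 k * x + -β0 k = -(α0 k * x + β0 k) by ring, Real.tanh_neg]
      ring
  have hzg : ∀ i, ∑ k, c k * Real.tanh (α k * z i + β k) + C0 = 0 := by
    intro i
    have h1 := hzero i
    have h2 : ∀ k : Fin n, s k * σ (a k * z i + b k)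
        = c0f k * Real.tanh (α0 k * z i + β0 k) + d * s k := by
      intro k
      rw [hσy]
      rw [show t * (a k * z i + b k) = α0 k * z i + β0 k by
        simp only [hα0, hβ0]; ring]
      simp only [hc0f]
      ring
    rw [Finset.sum_congr rfl (fun k _ => h2 k), Finset.sum_add_distrib,
      ← Finset.mul_sum] at h1
    rw [Finset.sum_congr rfl (fun k _ => hterm k (z i)), hC0]
    linarith
  have hinj : Function.Injective (fun k => (α k, β k)) := by
    intro k1 k2 hpair
    by_contra hne
    have h1 : α k1 = α k2 := congrArg Prod.fst hpair
    have h2 : β k1 = β k2 := congrArg Prod.snd hpair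
    have hcases : (α0 k1 = α0 k2 ∧ β0 k1 = β0 k2)
        ∨ (α0 k1 = -α0 k2 ∧ β0 k1 = -β0 k2) := by
      by_cases hk1 : 0 < α0 k1 <;> by_cases hk2 : 0 < α0 k2
      · left; simp only [hα, hβ, if_pos hk1, if_pos hk2] at h1 h2; exact ⟨h1, h2⟩
      · right; simp only [hα, hβ, if_pos hk1, if_neg hk2] at h1 h2
        constructor <;> linarith
      · right; simp only [hα, hβ, if_neg hk1, if_pos hk2] at h1 h2
        constructor <;> linarith
      · left; simp only [hα, hβ, if_neg hk1, if_neg hk2] at h1 h2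
        constructor <;> linarith
    apply hab k1 k2 hne
    rcases hcases with ⟨ha', hb'⟩ | ⟨ha', hb'⟩
    · simp only [hα0, hβ0] at ha' hb'
      exact Or.inl ⟨mul_left_cancel₀ (ne_of_gt ht) ha',
        mul_left_cancel₀ (ne_of_gt ht) hb'⟩
    · simp only [hα0, hβ0] at ha' hb'
      refine Or.inr ⟨?_, ?_⟩
      · exact mul_left_cancel₀ (ne_of_gt ht) (by rw [mul_neg]; exact ha')
      · exact mul_left_cancel₀ (ne_of_gt ht) (by rw [mul_neg]; exact hb')
  obtain ⟨hC00, hck⟩ := tanh_indep n α β c C0 hαpos hinj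
    (g_eq_zero n α β c C0 z hz hzg)
  have hsk : ∀ k, s k = 0 := by
    intro k
    have hk' := hck k
    by_cases hk : 0 < α0 k
    · simp only [hc, if_pos hk, hc0f] at hk'
      exact (mul_eq_zero.mp hk').resolve_left hq
    · simp only [hc, if_neg hk, hc0f, neg_eq_zero] at hk'
      exact (mul_eq_zero.mp hk').resolve_left hq
  refine ⟨?_, hsk⟩
  have hsum : ∑ k, s k = 0 := Finset.sum_eq_zero (fun k _ => hsk k)
  rw [hC0, hsum, mul_zero, add_zero] at hC00
  exact hC00
end
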